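/- arXiv:math/0105250 — 7 statements merged into one kernel-verified Lean document; each statement's English description precedes it below -/
import Mathlib

section
/- Let C be a localization of K[q,q^{-1}] (K a field of characteristic zero), ε a primitive l-th root of unity with GCD(s,l)=1 (for s ≠ 0), R a free C-module that is a C-algebra, and E = R[x;τ,δ] a q^s-skew extension whose reduction mod (q-ε) has the property that x^l mod (q-ε) is central in E_ε. Then δ^l(a) ∈ (q-ε)R and τ^l(a) - a ∈ (q-ε)R for all a ∈ R. -/
/-- Let `ε` be a primitive `l`-th root of unity with `gcd(s,l)=1` (for `s ≠ 0`) and let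
`E = R[x;τ,δ]` be a `q^s`-skew extension such that `x^l` is central mod `(q-ε)`.
Then `δ^l(a) ∈ (q-ε)R` and `τ^l(a) - a ∈ (q-ε)R` for all `a ∈ R`. -/
theorem deltal_taul_mod_q_eps
    {K C R E : Type*} [Field K] [CharZero K] [CommRing C] [Algebra K C]
    [Ring R] [Ring E] [Algebra C R] [Algebra C E] [Module.Free C R]
    (q eps : Cˣ) (l : ℕ) (hl : 0 < l) (hprim : IsPrimitiveRoot (eps : C) l)
    (s : ℤ) (hs : s ≠ 0 → IsCoprime s (l : ℤ))
    (f : R →+* E) (hfC : ∀ c : C, f (algebraMap C R c) = algebraMap C E c)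
    (x : E) (τ : R →+* R) (δ : R →+ R)
    (hderiv : ∀ a b : R, δ (a * b) = δ a * b + τ a * δ b)
    (hskew : ∀ a : R, δ (τ a) = ((q ^ s : Cˣ) : C) • τ (δ a))
    (hrel : ∀ a : R, x * f a = f (τ a) * x + f (δ a))
    -- coefficient extraction: the monomials `x^i` are free over `R` modulo `(q-ε)`
    (hcoeff : ∀ (n : ℕ) (c : Fin n → R),
      (∃ e : E, (∑ i : Fin n, f (c i) * x ^ (i : ℕ))
          = algebraMap C E ((q : C) - (eps : C)) * e) →
      ∀ i, ∃ r : R, c i = ((q : C) - (eps : C)) • r)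
    -- `x^l` is central in `E_ε = E mod (q-ε)`
    (hcentral : ∀ e : E, ∃ w : E,
      x ^ l * e - e * x ^ l = algebraMap C E ((q : C) - (eps : C)) * w) :
    ∀ a : R,
      (∃ r : R, (⇑δ)^[l] a = ((q : C) - (eps : C)) • r) ∧
      (∃ r : R, (⇑τ)^[l] a - a = ((q : C) - (eps : C)) • r) := by
  intro a
  -- Step 1: compute x^n * f a as an R-combination of powers of x.
  have key : ∀ n : ℕ, ∃ c : ℕ → R, (∀ j, n < j → c j = 0) ∧ c 0 = (⇑δ)^[n] a ∧
      c n = (⇑τ)^[n] a ∧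
      x ^ n * f a = ∑ i ∈ Finset.range (n + 1), f (c i) * x ^ i := by
    intro n
    induction n with
    | zero =>
      refine ⟨fun j => if j = 0 then a else 0, ?_, ?_, ?_, ?_⟩
      · intro j hj; exact if_neg (by omega)
      · simp
      · simp
      · simp
    | succ n ih =>
      obtain ⟨c, hc0, hcz, hcn, hsum⟩ := ih
      refine ⟨fun j => match j with
        | 0 => δ (c 0)
        | j + 1 => δ (c (j + 1)) + τ (c j), ?_, ?_, ?_, ?_⟩
      · intro j hj
        match j, hj with
        | j + 1, hj =>
          simp only []
          rw [hc0 (j+1) (by omega), hc0 j (by omega)]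
          simp
      · simp [Function.iterate_succ_apply', hcz]
      · simp only []
        rw [hc0 (n+1) (by omega), Function.iterate_succ_apply', hcn]
        simp
      · have : x ^ (n + 1) * f a = x * (x ^ n * f a) := by
          rw [← mul_assoc, ← pow_succ']
        rw [this, hsum, Finset.mul_sum]
        have hterm : ∀ i ∈ Finset.range (n + 1),
            x * (f (c i) * x ^ i) = f (τ (c i)) * x ^ (i + 1) + f (δ (c i)) * x ^ i := by
          intro i _
          rw [← mul_assoc, hrel, add_mul, mul_assoc, ← pow_succ']
        rw [Finset.sum_congr rfl hterm, Finset.sum_add_distrib]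
        -- RHS
        rw [Finset.sum_range_succ' (fun j => f (match j with
          | 0 => δ (c 0) | j + 1 => δ (c (j + 1)) + τ (c j)) * x ^ j) (n + 1)]
        simp only [pow_zero, mul_one, map_add, add_mul]
        rw [Finset.sum_add_distrib]
        have h1 : ∑ i ∈ Finset.range (n + 1), f (δ (c (i + 1))) * x ^ (i + 1)
            = ∑ i ∈ Finset.range n, f (δ (c (i + 1))) * x ^ (i + 1) := by
          rw [Finset.sum_range_succ, hc0 (n+1) (by omega)]
          simp
        have h2 : ∑ i ∈ Finset.range (n + 1), f (δ (c i)) * x ^ i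
            = (∑ i ∈ Finset.range n, f (δ (c (i + 1))) * x ^ (i + 1)) + f (δ (c 0)) := by
          rw [Finset.sum_range_succ' (fun i => f (δ (c i)) * x ^ i) n]
          simp
        rw [h1, h2]
        abel
  obtain ⟨c, hc0, hcz, hcn, hsum⟩ := key l
  obtain ⟨w, hw⟩ := hcentral (f a)
  set d : Fin (l + 1) → R := fun i => c i - (if (i : ℕ) = l then a else 0) with hd
  have hdiv : ∃ e : E, (∑ i : Fin (l + 1), f (d i) * x ^ (i : ℕ))
      = algebraMap C E ((q : C) - (eps : C)) * e := by
    refine ⟨w, ?_⟩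
    rw [← hw, hsum]
    have e1 : ∑ i : Fin (l+1), f (d i) * x ^ (i : ℕ)
        = ∑ i ∈ Finset.range (l+1),
            (f (c i) * x ^ i - f (if i = l then a else 0) * x ^ i) := by
      rw [← Fin.sum_univ_eq_sum_range
        (fun i => f (c i) * x ^ i - f (if i = l then a else 0) * x ^ i) (l+1)]
      exact Finset.sum_congr rfl fun i _ => by simp [hd, map_sub, sub_mul]
    rw [e1, Finset.sum_sub_distrib]
    congr 1
    rw [Finset.sum_eq_single l]
    · simp
    · intro b _ hb; simp [hb]
    · intro h; exact absurd (Finset.self_mem_range_succ l) h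
  have hres := hcoeff (l + 1) d hdiv
  constructor
  · obtain ⟨r, hr⟩ := hres ⟨0, by omega⟩
    refine ⟨r, ?_⟩
    rw [← hcz]
    have h0l : (0:ℕ) ≠ l := by omega
    simpa [hd, h0l] using hr
  · obtain ⟨r, hr⟩ := hres ⟨l, by omega⟩
    refine ⟨r, ?_⟩
    rw [← hcn]
    simpa [hd] using hr
end

section
/- Let δ be a τ-derivation of R_ε with δτ = ε^s τδ, where on R one has δτ = q^s τδ. Define θ = (τ^l - id)/(q-ε) reduced mod (q-ε) (a derivation of E_ε) and let s̄ = sl·ε^{-1}. Then δ∘θ = (θ + s̄)∘δ on R_ε, i.e. δ(θ(a)) = θ(δ(a)) + s̄·δ(a) for all a ∈ R_ε. -/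
/-- Let `θ = (τ^l - id)/(q-ε)` on `R_ε` and `s̄ = sl·ε^{-1}` (the value of
`(q^{sl}-1)/(q-ε)` at `q = ε`). Then `δ∘θ = (θ + s̄)∘δ` on `R_ε`. -/
theorem delta_theta_commutation
    {C R Rε : Type*} [CommRing C] [IsDomain C] [Ring R] [Ring Rε] [Algebra C R]
    [Module.Free C R]
    (q eps : Cˣ) (l : ℕ) (hl : 0 < l) (hprim : IsPrimitiveRoot (eps : C) l)
    (s : ℕ)
    (τ : R →+* R) (δ : R →+ R)
    (hτC : ∀ c : C, τ (algebraMap C R c) = algebraMap C R c)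
    (hδC : ∀ (c : C) (a : R), δ (algebraMap C R c * a) = algebraMap C R c * δ a)
    (hderiv : ∀ a b : R, δ (a * b) = δ a * b + τ a * δ b)
    (hskew : ∀ a : R, δ (τ a) = algebraMap C R ((q : C) ^ s) * τ (δ a))
    (π : R →+* Rε) (hsurj : Function.Surjective π)
    (hker : ∀ r : R, π r = 0 ↔ ∃ b : R, r = algebraMap C R ((q : C) - (eps : C)) * b)
    (hreg : ∀ r : R, algebraMap C R ((q : C) - (eps : C)) * r = 0 → r = 0)
    (Θ : R → R)
    (hΘ : ∀ a : R, (⇑τ)^[l] a - a = algebraMap C R ((q : C) - (eps : C)) * Θ a)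
    (θ : Rε → Rε) (hθ : ∀ a : R, θ (π a) = π (Θ a))
    (δε : Rε → Rε) (hδε : ∀ a : R, δε (π a) = π (δ a))
    (u : C) (hu : (q : C) ^ (s * l) - 1 = ((q : C) - (eps : C)) * u) :
    (∀ b : Rε, δε (θ b) = θ (δε b) + π (algebraMap C R u) * δε b) ∧
    π (algebraMap C R u)
      = π (algebraMap C R (((s * l : ℕ) : C) * ((eps⁻¹ : Cˣ) : C))) := by
  -- δ on iterates of τ
  have hiter : ∀ (k : ℕ) (a : R),
      δ ((⇑τ)^[k] a) = algebraMap C R ((q : C) ^ (s * k)) * (⇑τ)^[k] (δ a) := by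
    intro k
    induction k with
    | zero => intro a; simp
    | succ k ih =>
      intro a
      rw [Function.iterate_succ_apply', hskew, ih, map_mul, hτC,
        Function.iterate_succ_apply']
      rw [← mul_assoc, ← map_mul, ← pow_add]
      ring_nf
  -- π kills (q-ε)·b
  have hπ0 : ∀ b : R, π (algebraMap C R ((q : C) - (eps : C)) * b) = 0 := by
    intro b; exact (hker _).mpr ⟨b, rfl⟩
  -- π ∘ τ^[l] = π
  have hπτ : ∀ x : R, π ((⇑τ)^[l] x) = π x := by
    intro x
    have h := congrArg π (hΘ x)
    rw [map_sub, hπ0, sub_eq_zero] at h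
    exact h
  -- key identity on R
  have hkey : ∀ a : R,
      δ (Θ a) = algebraMap C R u * (⇑τ)^[l] (δ a) + Θ (δ a) := by
    intro a
    have h : algebraMap C R ((q : C) - (eps : C)) *
        (δ (Θ a) - (algebraMap C R u * (⇑τ)^[l] (δ a) + Θ (δ a))) = 0 := by
      have h1 : algebraMap C R ((q : C) - (eps : C)) * δ (Θ a)
          = algebraMap C R ((q : C) ^ (s * l)) * (⇑τ)^[l] (δ a) - δ a := by
        rw [← hδC, ← hΘ, map_sub, hiter]
      have h2 : algebraMap C R ((q : C) - (eps : C)) *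
          (algebraMap C R u * (⇑τ)^[l] (δ a) + Θ (δ a))
          = algebraMap C R ((q : C) ^ (s * l)) * (⇑τ)^[l] (δ a) - δ a := by
        rw [mul_add, ← mul_assoc, ← map_mul, ← hu, ← hΘ, map_sub, map_one,
          sub_mul, one_mul]
        abel
      rw [mul_sub, h1, h2, sub_self]
    exact sub_eq_zero.mp (hreg _ h)
  constructor
  · intro b
    obtain ⟨a, rfl⟩ := hsurj b
    rw [hθ, hδε, hδε, hθ, hkey, map_add, map_mul, hπτ]
    exact add_comm _ _
  · -- u ≡ sl·ε⁻¹ mod (q-ε)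
    by_cases hq : (q : C) = (eps : C)
    · -- degenerate: R is trivial
      have : ∀ r : R, r = 0 := by
        intro r
        apply hreg
        rw [hq, sub_self, map_zero, zero_mul]
      calc π (algebraMap C R u) = π 0 := by rw [this (algebraMap C R u)]
        _ = π (algebraMap C R (((s * l : ℕ) : C) * ((eps⁻¹ : Cˣ) : C))) := by
            rw [this (algebraMap C R (((s * l : ℕ) : C) * ((eps⁻¹ : Cˣ) : C)))]
    · have hne : (q : C) - (eps : C) ≠ 0 := sub_ne_zero.mpr hq
      set n := s * l with hn
      have hεl : (eps : C) ^ l = 1 := hprim.pow_eq_one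
      have hεn : (eps : C) ^ n = 1 := by
        rw [hn, mul_comm, pow_mul, hεl, one_pow]
      -- u equals the geometric sum
      have hgeo : (∑ i ∈ Finset.range n, (q : C) ^ i * (eps : C) ^ (n - 1 - i))
          * ((q : C) - (eps : C)) = (q : C) ^ n - 1 := by
        rw [geom_sum₂_mul, hεn]
      have hu' : u = ∑ i ∈ Finset.range n, (q : C) ^ i * (eps : C) ^ (n - 1 - i) := by
        apply mul_left_cancel₀ hne
        rw [← hu, ← hgeo]; ring
      -- the sum is ≡ n·ε^{n-1} mod (q-ε)
      have hdvd : ((q : C) - (eps : C)) ∣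
          (u - ((n : C) * (eps : C) ^ (n - 1))) := by
        rw [hu']
        have : (n : C) * (eps : C) ^ (n - 1) =
            ∑ i ∈ Finset.range n, (eps : C) ^ i * (eps : C) ^ (n - 1 - i) := by
          rw [Finset.sum_congr rfl (fun i hi => ?_), Finset.sum_const,
            Finset.card_range, nsmul_eq_mul]
          rw [← pow_add]
          congr 1
          have := Finset.mem_range.mp hi
          omega
        rw [this, ← Finset.sum_sub_distrib]
        apply Finset.dvd_sum
        intro i _
        rw [← sub_mul]
        exact Dvd.dvd.mul_right (sub_dvd_pow_sub_pow _ _ i) _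
      -- ε^{n-1} vs ε⁻¹
      have hcast : ((n : ℕ) : C) * (eps : C) ^ (n - 1)
          = ((n : ℕ) : C) * ((eps⁻¹ : Cˣ) : C) := by
        rcases Nat.eq_zero_or_pos n with h0 | hpos
        · simp [h0]
        · congr 1
          have hne' : (eps : C) ≠ 0 := eps.ne_zero
          apply mul_left_cancel₀ hne'
          rw [← pow_succ', Nat.sub_add_cancel hpos, hεn]
          simp [← Units.val_mul]
      obtain ⟨v, hv⟩ := hdvd
      have : algebraMap C R u - algebraMap C R (((n : ℕ) : C) * ((eps⁻¹ : Cˣ) : C))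
          = algebraMap C R ((q : C) - (eps : C)) * algebraMap C R v := by
        rw [← map_mul, ← map_sub, ← hv, hcast]
      have h := congrArg π this
      rw [map_sub, hπ0, sub_eq_zero] at h
      exact h
end

section
/- With D_u as above (quantum adjoint action), the bracket {u_ε, v_ε} := D_u(v_ε) = -D_v(u_ε) defines a Poisson bracket on the center Z_ε of R_ε: it is bilinear, antisymmetric, satisfies the Jacobi identity, and the Leibniz rule {u_ε, v_ε w_ε} = {u_ε, v_ε}w_ε + v_ε{u_ε, w_ε}. -/
/-- The bracket `{u_ε, v_ε} := D_u(v_ε)` given by the quantum adjoint action defines a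
Poisson bracket on the center `Z_ε` of `R_ε`: bilinear, antisymmetric, satisfying the
Jacobi identity and the Leibniz rule. -/
theorem poisson_bracket_on_center
    {C R Rε : Type*} [CommRing C] [Ring R] [Ring Rε] [Algebra C R] [Module.Free C R]
    (q eps : C)
    (π : R →+* Rε) (hsurj : Function.Surjective π)
    (hker : ∀ r : R, π r = 0 ↔ ∃ b : R, r = algebraMap C R (q - eps) * b)
    (hreg : ∀ r : R, algebraMap C R (q - eps) * r = 0 → r = 0) :
    ∃ P : Subring.center Rε → Subring.center Rε → Subring.center Rε,
      -- compatibility with the quantum adjoint action: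
      (∀ (u v w : R) (hu : π u ∈ Subring.center Rε) (hv : π v ∈ Subring.center Rε),
        u * v - v * u = algebraMap C R (q - eps) * w →
        ((P ⟨π u, hu⟩ ⟨π v, hv⟩ : Subring.center Rε) : Rε) = π w) ∧
      -- bilinearity (additivity in each argument):
      (∀ x y z, P (x + y) z = P x z + P y z) ∧
      (∀ x y z, P x (y + z) = P x y + P x z) ∧
      -- antisymmetry:
      (∀ x y, P x y = - P y x) ∧
      -- Jacobi identity:
      (∀ x y z, P x (P y z) + P y (P z x) + P z (P x y) = 0) ∧
      -- Leibniz rule: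
      (∀ x y z, P x (y * z) = P x y * z + y * P x z) := by
  classical
  set k : C := q - eps with hkdef
  have hsm : ∀ r : R, algebraMap C R k * r = k • r := fun r => (Algebra.smul_def k r).symm
  have hker' : ∀ r : R, π r = 0 ↔ ∃ b : R, r = k • b := by
    intro r; rw [hker]; exact exists_congr fun b => by rw [hsm]
  have hcancel : ∀ a b : R, k • a = k • b → a = b := by
    intro a b h
    have h0 : k • (a - b) = 0 := by rw [smul_sub, h, sub_self]
    have := hreg (a - b) (by rw [hsm]; exact h0)
    exact sub_eq_zero.mp this
  have hπ0 : ∀ b : R, π (k • b) = 0 := fun b => (hker' _).mpr ⟨b, rfl⟩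
  obtain ⟨σ, hσ⟩ := hsurj.hasRightInverse
  -- commutator with a central element lies in the kernel
  have hcom : ∀ u v : R, π u ∈ Subring.center Rε → ∃ w : R, u * v - v * u = k • w := by
    intro u v hu
    refine (hker' _).mp ?_
    rw [map_sub, map_mul, map_mul, Subring.mem_center_iff.mp hu (π v), sub_self]
  -- the derivative of a central element is central
  have hcent : ∀ u v w : R, π u ∈ Subring.center Rε → π v ∈ Subring.center Rε →
      u * v - v * u = k • w → π w ∈ Subring.center Rε := by
    intro u v w hu hv hw
    rw [Subring.mem_center_iff]
    intro z
    obtain ⟨s, rfl⟩ := hsurj z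
    obtain ⟨a, ha⟩ := hcom v s hv
    obtain ⟨b, hb⟩ := hcom u s hu
    obtain ⟨a', ha'⟩ := hcom u a hu
    obtain ⟨b', hb'⟩ := hcom v b hv
    have key : k • (w * s - s * w) = k • (k • (a' - b')) := by
      have e1 : k • (w * s - s * w) = (u * v - v * u) * s - s * (u * v - v * u) := by
        rw [hw]
        simp only [smul_sub, smul_mul_assoc, mul_smul_comm]
      have e2 : (u * v - v * u) * s - s * (u * v - v * u)
          = u * (v * s - s * v) - (v * s - s * v) * u
            - (v * (u * s - s * u) - (u * s - s * u) * v) := by noncomm_ring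
      have e3 : u * (v * s - s * v) - (v * s - s * v) * u
            - (v * (u * s - s * u) - (u * s - s * u) * v)
          = k • ((u * a - a * u) - (v * b - b * v)) := by
        rw [ha, hb]
        simp only [smul_sub, smul_mul_assoc, mul_smul_comm]
      rw [e1, e2, e3, ha', hb']
      simp only [smul_sub]
    have hws : w * s - s * w = k • (a' - b') := hcancel _ _ key
    have : π (w * s - s * w) = 0 := by rw [hws]; exact hπ0 _
    have := sub_eq_zero.mp (by rwa [map_sub, map_mul, map_mul] at this)
    exact this.symm
  -- choose the bracket witnesses
  set Z := Subring.center Rε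
  have exδ : ∀ x y : Z, ∃ w : R, σ (↑x) * σ (↑y) - σ (↑y) * σ (↑x) = k • w := by
    intro x y
    exact hcom _ _ (by rw [hσ]; exact x.2)
  choose δ hδ using exδ
  have hδc : ∀ x y : Z, π (δ x y) ∈ Z :=
    fun x y => hcent _ _ _ (by rw [hσ]; exact x.2) (by rw [hσ]; exact y.2) (hδ x y)
  set P : Z → Z → Z := fun x y => ⟨π (δ x y), hδc x y⟩ with hP
  -- key characterization: any lifts compute the bracket
  have keyL : ∀ (x y : Z) (u v w : R), π u = ↑x → π v = ↑y →
      u * v - v * u = k • w → π w = π (δ x y) := by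
    intro x y u v w hu hv hw
    obtain ⟨d, hd⟩ : ∃ d, u - σ ↑x = k • d :=
      (hker' _).mp (by rw [map_sub, hu, hσ, sub_self])
    obtain ⟨e, he⟩ : ∃ e, v - σ ↑y = k • e :=
      (hker' _).mp (by rw [map_sub, hv, hσ, sub_self])
    have hu' : u = σ ↑x + k • d := by rw [← hd]; abel
    have hv' : v = σ ↑y + k • e := by rw [← he]; abel
    have hexp : k • w = k • (δ x y + (σ ↑x * e - e * σ ↑x) + (d * σ ↑y - σ ↑y * d)
        + k • (d * e - e * d)) := by
      rw [← hw, hu', hv']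
      simp only [smul_add, ← hδ x y]
      simp only [smul_sub, smul_add, smul_smul, add_mul, mul_add, sub_mul, mul_sub,
        smul_mul_assoc, mul_smul_comm]
      module
    have hw' : w = δ x y + (σ ↑x * e - e * σ ↑x) + (d * σ ↑y - σ ↑y * d)
        + k • (d * e - e * d) := hcancel _ _ hexp
    have cx : ∀ g : Rε, g * ↑x = ↑x * g := fun g => Subring.mem_center_iff.mp x.2 g
    have cy : ∀ g : Rε, g * ↑y = ↑y * g := fun g => Subring.mem_center_iff.mp y.2 g
    rw [hw', map_add, map_add, map_add, hπ0, map_sub, map_mul, map_mul,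
      map_sub, map_mul, map_mul, hσ, hσ, ← cx (π e), cy (π d)]
    simp
  refine ⟨P, ?_, ?_, ?_, ?_, ?_, ?_⟩
  · -- compatibility
    intro u v w hu hv h
    have h' : u * v - v * u = k • w := by rw [← hsm]; exact h
    exact (keyL ⟨π u, hu⟩ ⟨π v, hv⟩ u v w rfl rfl h').symm
  · -- additivity in first argument
    intro x y z
    apply Subtype.ext
    have hwit : (σ ↑x + σ ↑y) * σ ↑z - σ ↑z * (σ ↑x + σ ↑y) = k • (δ x z + δ y z) := by
      rw [smul_add, ← hδ x z, ← hδ y z]; noncomm_ring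
    have := keyL (x + y) z (σ ↑x + σ ↑y) (σ ↑z) (δ x z + δ y z)
      (by rw [map_add, hσ, hσ]; rfl) (hσ _) hwit
    show π (δ (x + y) z) = ((P x z + P y z : Z) : Rε)
    rw [← this, map_add]; rfl
  · -- additivity in second argument
    intro x y z
    apply Subtype.ext
    have hwit : σ ↑x * (σ ↑y + σ ↑z) - (σ ↑y + σ ↑z) * σ ↑x = k • (δ x y + δ x z) := by
      rw [smul_add, ← hδ x y, ← hδ x z]; noncomm_ring
    have := keyL x (y + z) (σ ↑x) (σ ↑y + σ ↑z) (δ x y + δ x z)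
      (hσ _) (by rw [map_add, hσ, hσ]; rfl) hwit
    show π (δ x (y + z)) = ((P x y + P x z : Z) : Rε)
    rw [← this, map_add]; rfl
  · -- antisymmetry
    intro x y
    apply Subtype.ext
    have hwit : σ ↑y * σ ↑x - σ ↑x * σ ↑y = k • (-δ x y) := by
      rw [smul_neg, ← hδ x y]; noncomm_ring
    have := keyL y x (σ ↑y) (σ ↑x) (-δ x y) (hσ _) (hσ _) hwit
    show π (δ x y) = ((-(P y x) : Z) : Rε)
    have hc : ((-(P y x) : Z) : Rε) = -(π (δ y x)) := rfl
    rw [hc, ← this, map_neg, neg_neg]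
  · -- Jacobi identity
    intro x y z
    apply Subtype.ext
    set u := σ (↑x : Rε)
    set v := σ (↑y : Rε)
    set w := σ (↑z : Rε)
    obtain ⟨t1, ht1⟩ := hcom u (δ y z) (by rw [hσ]; exact x.2)
    obtain ⟨t2, ht2⟩ := hcom v (δ z x) (by rw [hσ]; exact y.2)
    obtain ⟨t3, ht3⟩ := hcom w (δ x y) (by rw [hσ]; exact z.2)
    have k1 : π t1 = π (δ x (P y z)) := keyL x (P y z) u (δ y z) t1 (hσ _) rfl ht1
    have k2 : π t2 = π (δ y (P z x)) := keyL y (P z x) v (δ z x) t2 (hσ _) rfl ht2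
    have k3 : π t3 = π (δ z (P x y)) := keyL z (P x y) w (δ x y) t3 (hσ _) rfl ht3
    have hsum : t1 + t2 + t3 = 0 := by
      refine hcancel _ 0 (hcancel _ _ ?_)
      rw [smul_zero, smul_zero]
      have e1 : k • (k • t1) = u * (v * w - w * v) - (v * w - w * v) * u := by
        rw [← ht1, smul_sub, ← mul_smul_comm, ← smul_mul_assoc, ← hδ y z]
      have e2 : k • (k • t2) = v * (w * u - u * w) - (w * u - u * w) * v := by
        rw [← ht2, smul_sub, ← mul_smul_comm, ← smul_mul_assoc, ← hδ z x]
      have e3 : k • (k • t3) = w * (u * v - v * u) - (u * v - v * u) * w := by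
        rw [← ht3, smul_sub, ← mul_smul_comm, ← smul_mul_assoc, ← hδ x y]
      rw [smul_add, smul_add, smul_add, smul_add, e1, e2, e3]
      noncomm_ring
    show ((P x (P y z) + P y (P z x) + P z (P x y) : Z) : Rε) = ((0 : Z) : Rε)
    have : ((P x (P y z) + P y (P z x) + P z (P x y) : Z) : Rε)
        = π (δ x (P y z)) + π (δ y (P z x)) + π (δ z (P x y)) := rfl
    rw [this, ← k1, ← k2, ← k3, ← map_add, ← map_add, hsum, map_zero]
    rfl
  · -- Leibniz rule
    intro x y z
    apply Subtype.ext
    have hyz : π (σ ↑y * σ ↑z) = ((y * z : Z) : Rε) := by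
      rw [map_mul, hσ, hσ]; rfl
    have hwit : σ ↑x * (σ ↑y * σ ↑z) - (σ ↑y * σ ↑z) * σ ↑x
        = k • (δ x y * σ ↑z + σ ↑y * δ x z) := by
      rw [smul_add, ← smul_mul_assoc, ← mul_smul_comm, ← hδ x y, ← hδ x z]
      noncomm_ring
    have := keyL x (y * z) (σ ↑x) (σ ↑y * σ ↑z) (δ x y * σ ↑z + σ ↑y * δ x z)
      (hσ _) hyz hwit
    show π (δ x (y * z)) = ((P x y * z + y * P x z : Z) : Rε)
    rw [← this, map_add, map_mul, map_mul, hσ, hσ]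
    rfl
end

section
/- Let K be algebraically closed, ε a primitive l-th root of unity, and B_ε the twisted Laurent polynomial algebra over K generated by y_1^{±1},…,y_{2r}^{±1}, z_1^{±1},…,z_t^{±1} with y_{2i-1}y_{2i} = ε^{d_i} y_{2i}y_{2i-1}, GCD(d_i,l)=1, all other pairs commuting. Then every irreducible finite-dimensional representation of B_ε has dimension exactly l^r, and is uniquely determined by its central character. -/
/-!
The `a i` commute, so an irreducible representation `V` has a common eigenvector `v₀` of the
`a i`, with eigenvalues `ν`, while the central elements `b i ^ l` and `z j` act by scalars `β`, `α`
(Schur). For `k ∈ (Fin l)^r` the vectors `w k = b^k v₀` are eigenvectors of `a i` with eigenvalue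
`(ε ^ d i) ^ k i * ν i`; since `ε ^ d i` is a primitive `l`-th root of unity these eigenvalue
tuples are distinct, so the `w k` are linearly independent, and their span is stable under all
generators, hence is `V`. So `dim V = l ^ r`, and in the basis `w` every generator acts by a
matrix that depends only on `ν`, `β`, `α`. If two irreducible representations have the same
central character, then `a i ^ l` acts on both by the same scalar, so the two `ν` differ by roots
of unity `(ε ^ d i) ^ k i`; replacing `v₀` by a suitable `w k` makes them equal, and the two bases
then define an isomorphism of representations.
-/

open Module

section CommMonomial

variable {M ι : Type*} [Monoid M] [Fintype ι] {f : ι → M}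

def commMonomial (hf : ∀ i j, Commute (f i) (f j)) (k : ι → ℕ) : M :=
  Finset.univ.noncommProd (fun i => f i ^ k i)
    (Pairwise.set_pairwise (fun i j _ => (hf i j).pow_pow (k i) (k j)) _)

variable (hf : ∀ i j, Commute (f i) (f j))

theorem commMonomial_zero : commMonomial hf 0 = 1 :=
  (Finset.noncommProd_eq_pow_card _ _ _ 1 fun _ _ => pow_zero _).trans (one_pow _)

theorem commMonomial_add (k k' : ι → ℕ) :
    commMonomial hf (k + k') = commMonomial hf k * commMonomial hf k' := by
  simp only [commMonomial, Pi.add_apply, pow_add]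
  exact Finset.noncommProd_mul_distrib (fun i => f i ^ k i) (fun i => f i ^ k' i) _ _
    fun i _ j _ _ => (hf i j).pow_pow _ _

theorem commMonomial_single [DecidableEq ι] (i : ι) (m : ℕ) :
    commMonomial hf (Pi.single i m) = f i ^ m := by
  rw [commMonomial, ← Finset.mul_noncommProd_erase _ (Finset.mem_univ i), Pi.single_eq_same]
  refine (congrArg _ ((Finset.noncommProd_eq_pow_card _ _ _ 1 fun j hj => ?_).trans
    (one_pow _))).trans (mul_one _)
  rw [Pi.single_eq_of_ne (Finset.ne_of_mem_erase hj), pow_zero]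

theorem isUnit_commMonomial (hu : ∀ i, IsUnit (f i)) (k : ι → ℕ) :
    IsUnit (commMonomial hf k) :=
  Finset.noncommProd_induction _ _ _ IsUnit (fun _ _ => IsUnit.mul) isUnit_one
    fun i _ => (hu i).pow _

end CommMonomial

section TwistedCommute

variable {K A : Type*} [CommSemiring K] [Semiring A] [Algebra K A] {x y : A} {c : K}

theorem mul_pow_eq_smul_of_mul_eq_smul (h : x * y = c • (y * x)) (m : ℕ) :
    x * y ^ m = c ^ m • (y ^ m * x) := by
  induction m with
  | zero => simp
  | succ m ih =>
    rw [pow_succ, ← mul_assoc, ih, smul_mul_assoc, mul_assoc, h, mul_smul_comm, smul_smul,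
      ← mul_assoc, ← pow_succ, ← pow_succ]

theorem pow_mul_eq_smul_of_mul_eq_smul (h : x * y = c • (y * x)) (m : ℕ) :
    x ^ m * y = c ^ m • (y * x ^ m) := by
  induction m with
  | zero => simp
  | succ m ih =>
    rw [pow_succ, mul_assoc, h, mul_smul_comm, ← mul_assoc, ih, smul_mul_assoc, smul_smul,
      mul_assoc, ← pow_succ, ← pow_succ']

theorem mul_commMonomial {ι : Type*} [Fintype ι] {f : ι → A} (hf : ∀ i j, Commute (f i) (f j))
    {c : ι → K} (hx : ∀ i, x * f i = c i • (f i * x)) (k : ι → ℕ) :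
    x * commMonomial hf k = (∏ i, c i ^ k i) • (commMonomial hf k * x) := by
  classical
  induction k using Pi.single_induction with
  | zero => simp [commMonomial_zero]
  | add k k' hk hk' =>
    rw [commMonomial_add, ← mul_assoc, hk, smul_mul_assoc, mul_assoc, hk', mul_smul_comm,
      smul_smul, ← mul_assoc]
    simp only [Pi.add_apply, pow_add, Finset.prod_mul_distrib]
  | single i m =>
    rw [commMonomial_single, mul_pow_eq_smul_of_mul_eq_smul (hx i),
      Finset.prod_eq_single i (fun j _ hj => by rw [Pi.single_eq_of_ne hj, pow_zero])
        (by simp), Pi.single_eq_same]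

end TwistedCommute

theorem Fin.val_comp_add_single_one {ι : Type*} [DecidableEq ι] {l : ℕ} [NeZero l]
    (k : ι → Fin l) (i : ι) :
    Fin.val ∘ k + Pi.single i 1 =
      Fin.val ∘ (k + Pi.single i 1) + Pi.single i (if (k i : ℕ) + 1 = l then l else 0) := by
  obtain ⟨n, rfl⟩ := Nat.exists_eq_succ_of_ne_zero (NeZero.ne l)
  funext j
  rcases eq_or_ne j i with rfl | hj
  · simp only [Pi.add_apply, Function.comp_apply, Pi.single_eq_same, Fin.val_add_one]
    split_ifs with hlast <;> rw [Fin.ext_iff, Fin.val_last] at hlast <;> omega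
  · simp [hj]

section Eigen

variable {K V : Type*} [Field K] [AddCommGroup V] [Module K V]

theorem Module.End.exists_common_eigenvector [IsAlgClosed K] [FiniteDimensional K V]
    [Nontrivial V] {n : ℕ} (f : Fin n → End K V) (hf : ∀ i j, Commute (f i) (f j)) :
    ∃ v : V, v ≠ 0 ∧ ∃ μ : Fin n → K, ∀ i, f i v = μ i • v := by
  induction n generalizing V with
  | zero => exact (exists_ne (0 : V)).imp fun v hv => ⟨hv, Fin.elim0, fun i => i.elim0⟩
  | succ n ih =>
    obtain ⟨μ₀, hμ₀⟩ := Module.End.exists_eigenvalue (f 0)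
    let E := (f 0).eigenspace μ₀
    have : Nontrivial E := Submodule.nontrivial_iff_ne_bot.mpr hμ₀
    have hE (i : Fin n) : Set.MapsTo (f i.succ) E E :=
      Module.End.mapsTo_genEigenspace_of_comm (hf 0 i.succ) μ₀ 1
    obtain ⟨v, hv, μ, hμ⟩ := ih (fun i => (f i.succ).restrict (hE i))
      fun i j => LinearMap.restrict_commute (hf i.succ j.succ) _ _
    refine ⟨v, by simpa using hv, Fin.cons μ₀ μ, Fin.cases ?_ fun i => ?_⟩
    · exact Module.End.mem_eigenspace_iff.mp v.2
    · exact congrArg Subtype.val (hμ i)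

theorem Module.End.linearIndependent_of_joint_eigenvectors {ι κ : Type*}
    (f : ι → End K V) (hf : ∀ i j, Commute (f i) (f j)) (χ : κ → ι → K)
    (hχ : Function.Injective χ) (v : κ → V) (hv : ∀ k, v k ≠ 0)
    (hfv : ∀ k i, f i (v k) = χ k i • v k) : LinearIndependent K v :=
  ((Module.End.independent_iInf_maxGenEigenspace_of_forall_mapsTo f
    fun i j μ => Module.End.mapsTo_maxGenEigenspace_of_comm (hf j i) μ).comp hχ).linearIndependent
    _ (fun k => Submodule.mem_iInf _ |>.mpr fun i =>
      Module.End.eigenspace_le_maxGenEigenspace (Module.End.mem_eigenspace_iff.mpr (hfv k i))) hv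

end Eigen

section Representation

variable {K B V : Type*} [Field K] [Ring B] [Algebra K B] [AddCommGroup V] [Module K V]

def IsIrreducibleRep (ρ : B →ₐ[K] End K V) : Prop :=
  ∀ W : Submodule K V, (∀ x : B, ∀ v ∈ W, ρ x v ∈ W) → W = ⊥ ∨ W = ⊤

def invariantSubalgebra (ρ : B →ₐ[K] End K V) (W : Submodule K V) : Subalgebra K B where
  carrier := {x | W ≤ W.comap (ρ x)}
  mul_mem' hx hy v hv := by simpa using hx (hy hv)
  one_mem' v hv := by simpa using hv
  add_mem' hx hy v hv := by simpa using W.add_mem (hx hv) (hy hv)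
  zero_mem' v _ := by simp
  algebraMap_mem' c v hv := by simpa [Algebra.algebraMap_eq_smul_one] using W.smul_mem c hv

theorem units_inv_mem_invariantSubalgebra [FiniteDimensional K V] (ρ : B →ₐ[K] End K V)
    (W : Submodule K V) (u : Bˣ) (hu : (u : B) ∈ invariantSubalgebra ρ W) :
    ((u⁻¹ : Bˣ) : B) ∈ invariantSubalgebra ρ W := by
  have hW : ∀ v ∈ W, ρ u v ∈ W := hu
  have hinj : Function.Injective ((ρ u).restrict hW) := fun x y h =>
    Subtype.ext (((Module.End.isUnit_iff _).mp (u.isUnit.map ρ)).injective (congrArg Subtype.val h))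
  intro v hv
  obtain ⟨w, hw⟩ := LinearMap.injective_iff_surjective.mp hinj ⟨v, hv⟩
  have : ρ ↑u⁻¹ v = w := by
    rw [← show ρ u w = v from congrArg Subtype.val hw, ← Module.End.mul_apply, ← map_mul,
      Units.inv_mul, map_one, Module.End.one_apply]
  show ρ ↑u⁻¹ v ∈ W
  exact this ▸ w.2

theorem AlgHom.units_inv_mem_equalizer {C : Type*} [Ring C] [Algebra K C] {φ ψ : B →ₐ[K] C}
    (u : Bˣ) (hu : (u : B) ∈ φ.equalizer ψ) : ((u⁻¹ : Bˣ) : B) ∈ φ.equalizer ψ := by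
  have : Units.map (φ : B →* C) u = Units.map (ψ : B →* C) u := Units.ext hu
  simpa using congrArg (fun w : Cˣ => ((w⁻¹ : Cˣ) : C)) this

theorem ne_zero_of_units_apply_eq_smul (ρ : B →ₐ[K] End K V) (u : Bˣ) {v : V} {c : K}
    (hv : v ≠ 0) (h : ρ u v = c • v) : c ≠ 0 := by
  rintro rfl
  exact hv (((Module.End.isUnit_iff _).mp (u.isUnit.map ρ)).injective (by simpa using h))

theorem apply_pow_eq_pow_smul (ρ : B →ₐ[K] End K V) {y : B} {v : V} {μ : K}
    (h : ρ y v = μ • v) (n : ℕ) : ρ (y ^ n) v = μ ^ n • v := by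
  induction n with
  | zero => simp
  | succ n ih => rw [pow_succ, map_mul, Module.End.mul_apply, h, map_smul, ih, smul_smul, pow_succ']

namespace IsIrreducibleRep

variable [IsAlgClosed K] [FiniteDimensional K V] [Nontrivial V] {ρ : B →ₐ[K] End K V}

theorem exists_eq_smul_one (hρ : IsIrreducibleRep ρ) {x : B} (hx : x ∈ Subalgebra.center K B) :
    ∃ c : K, ρ x = c • 1 := by
  obtain ⟨c, hc⟩ := Module.End.exists_eigenvalue (ρ x)
  have htop := (hρ _ fun y => Module.End.mapsTo_genEigenspace_of_comm
    (Commute.map (Commute.symm (Subalgebra.mem_center_iff.mp hx y)) ρ) c 1).resolve_left hc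
  refine ⟨c, LinearMap.ext fun v => ?_⟩
  have hv : v ∈ (ρ x).genEigenspace c 1 := by rw [htop]; exact Submodule.mem_top
  simpa using Module.End.mem_eigenspace_iff.mp hv

theorem apply_pow_eq_smul_one (hρ : IsIrreducibleRep ρ) {y : B} {n : ℕ}
    (hy : y ^ n ∈ Subalgebra.center K B) {v : V} (hv : v ≠ 0) {μ : K} (h : ρ y v = μ • v) :
    ρ (y ^ n) = μ ^ n • 1 := by
  obtain ⟨c, hc⟩ := hρ.exists_eq_smul_one hy
  have := apply_pow_eq_pow_smul ρ h n
  rw [hc, LinearMap.smul_apply, Module.End.one_apply] at this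
  rw [hc, smul_left_injective K hv this]

end IsIrreducibleRep

end Representation

/-- The defining relations and generators of `B_ε`, with `a i = y_{2i-1}` and `b i = y_{2i}`. -/
structure TwistedLaurentGenerators {K B : Type*} [CommSemiring K] [Semiring B] [Algebra K B]
    {r t : ℕ} (eps : K) (d : Fin r → ℕ) (a b : Fin r → Bˣ) (z : Fin t → Bˣ) : Prop where
  mul_eq_smul_mul : ∀ i, (a i : B) * (b i : B) = eps ^ (d i) • ((b i : B) * (a i : B))
  commute_ab : ∀ i j, i ≠ j → Commute (a i : B) (b j : B)
  commute_aa : ∀ i j, Commute (a i : B) (a j : B)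
  commute_bb : ∀ i j, Commute (b i : B) (b j : B)
  commute_za : ∀ j i, Commute (z j : B) (a i : B)
  commute_zb : ∀ j i, Commute (z j : B) (b i : B)
  commute_zz : ∀ j j', Commute (z j : B) (z j' : B)
  adjoin_eq_top : Algebra.adjoin K
    (Set.range (fun i => ((a i : Bˣ) : B)) ∪ Set.range (fun i => (((a i)⁻¹ : Bˣ) : B)) ∪
     Set.range (fun i => ((b i : Bˣ) : B)) ∪ Set.range (fun i => (((b i)⁻¹ : Bˣ) : B)) ∪
     Set.range (fun j => ((z j : Bˣ) : B)) ∪ Set.range (fun j => (((z j)⁻¹ : Bˣ) : B))) = ⊤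

namespace TwistedLaurentGenerators

section Relations

variable {K B : Type*} [CommSemiring K] [Semiring B] [Algebra K B] {r t l : ℕ} {eps : K}
  {d : Fin r → ℕ} {a b : Fin r → Bˣ} {z : Fin t → Bˣ}

theorem eq_top_of_units_mem (hB : TwistedLaurentGenerators eps d a b z) {T : Subalgebra K B}
    (hinv : ∀ u : Bˣ, (u : B) ∈ T → ((u⁻¹ : Bˣ) : B) ∈ T) (ha : ∀ i, (a i : B) ∈ T)
    (hb : ∀ i, (b i : B) ∈ T) (hz : ∀ j, (z j : B) ∈ T) : T = ⊤ := by
  rw [eq_top_iff, ← hB.adjoin_eq_top, Algebra.adjoin_le_iff]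
  rintro x (((((⟨i, rfl⟩ | ⟨i, rfl⟩) | ⟨i, rfl⟩) | ⟨i, rfl⟩) | ⟨i, rfl⟩) | ⟨i, rfl⟩)
  exacts [ha i, hinv _ (ha i), hb i, hinv _ (hb i), hz i, hinv _ (hz i)]

theorem mem_center_of_commute (hB : TwistedLaurentGenerators eps d a b z) {x : B}
    (ha : ∀ i, Commute x (a i)) (hb : ∀ i, Commute x (b i)) (hz : ∀ j, Commute x (z j)) :
    x ∈ Subalgebra.center K B := by
  have mem {y : B} (hy : Commute x y) : y ∈ Subalgebra.centralizer K {x} := by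
    rw [Subalgebra.mem_centralizer_iff]
    rintro _ rfl
    exact hy.eq
  have htop := hB.eq_top_of_units_mem (fun u hu => mem (Commute.units_inv_right
    ((Subalgebra.mem_centralizer_iff K).mp hu x rfl))) (fun i => mem (ha i)) (fun i => mem (hb i))
    fun j => mem (hz j)
  exact Subalgebra.mem_center_iff.mpr fun y =>
    ((Subalgebra.mem_centralizer_iff K).mp (Algebra.eq_top_iff.mp htop y) x rfl).symm

theorem z_mem_center (hB : TwistedLaurentGenerators eps d a b z) (j : Fin t) :
    (z j : B) ∈ Subalgebra.center K B :=
  hB.mem_center_of_commute (hB.commute_za j) (hB.commute_zb j) (hB.commute_zz j)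

theorem a_pow_mem_center (hB : TwistedLaurentGenerators eps d a b z)
    (hprim : IsPrimitiveRoot eps l) (i : Fin r) : (a i : B) ^ l ∈ Subalgebra.center K B := by
  refine hB.mem_center_of_commute (fun i' => (hB.commute_aa i i').pow_left l) (fun i' => ?_)
    fun j => ((hB.commute_za j i).pow_right l).symm
  rcases eq_or_ne i i' with rfl | h
  · have := pow_mul_eq_smul_of_mul_eq_smul (hB.mul_eq_smul_mul i) l
    rwa [pow_right_comm, hprim.pow_eq_one, one_pow, one_smul] at this
  · exact (hB.commute_ab i i' h).pow_left l

theorem b_pow_mem_center (hB : TwistedLaurentGenerators eps d a b z)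
    (hprim : IsPrimitiveRoot eps l) (i : Fin r) : (b i : B) ^ l ∈ Subalgebra.center K B := by
  refine hB.mem_center_of_commute (fun i' => ?_) (fun i' => (hB.commute_bb i i').pow_left l)
    fun j => ((hB.commute_zb j i).pow_right l).symm
  rcases eq_or_ne i' i with rfl | h
  · have := mul_pow_eq_smul_of_mul_eq_smul (hB.mul_eq_smul_mul i') l
    rw [pow_right_comm, hprim.pow_eq_one, one_pow, one_smul] at this
    exact this.symm
  · exact ((hB.commute_ab i' i h).pow_right l).symm

end Relations

section Representations

variable {K B V W : Type*} [Field K] [Ring B] [Algebra K B] [AddCommGroup V] [Module K V]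
  [AddCommGroup W] [Module K W] {r t l : ℕ} {eps : K} {d : Fin r → ℕ} {a b : Fin r → Bˣ}
  {z : Fin t → Bˣ} {v₀ : V} {ν : Fin r → K}

def monomialVector (hB : TwistedLaurentGenerators eps d a b z) (ρ : B →ₐ[K] End K V) (v₀ : V)
    (k : Fin r → ℕ) : V :=
  ρ (commMonomial hB.commute_bb k) v₀

theorem a_apply_monomialVector (hB : TwistedLaurentGenerators eps d a b z)
    (ρ : B →ₐ[K] End K V) (hν : ∀ i, ρ (a i) v₀ = ν i • v₀) (i : Fin r) (k : Fin r → ℕ) :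
    ρ (a i) (hB.monomialVector ρ v₀ k) = ((eps ^ d i) ^ k i * ν i) • hB.monomialVector ρ v₀ k := by
  have hx (j : Fin r) :
      (a i : B) * b j = (if j = i then eps ^ d i else 1) • ((b j : B) * a i) := by
    split_ifs with h
    · exact h ▸ hB.mul_eq_smul_mul i
    · rw [one_smul]
      exact (hB.commute_ab i j (Ne.symm h)).eq
  have := mul_commMonomial hB.commute_bb hx k
  simp only [ite_pow, one_pow, Finset.prod_ite_eq', Finset.mem_univ, if_true] at this
  rw [monomialVector, ← Module.End.mul_apply, ← map_mul, this, map_smul, map_mul,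
    LinearMap.smul_apply, Module.End.mul_apply, hν, map_smul, smul_smul]

theorem b_apply_monomialVector (hB : TwistedLaurentGenerators eps d a b z)
    (ρ : B →ₐ[K] End K V) (i : Fin r) (k : Fin r → ℕ) :
    ρ (b i) (hB.monomialVector ρ v₀ k) = hB.monomialVector ρ v₀ (k + Pi.single i 1) := by
  rw [monomialVector, monomialVector, add_comm, commMonomial_add, commMonomial_single, pow_one,
    map_mul, Module.End.mul_apply]

theorem monomialVector_add_single (hB : TwistedLaurentGenerators eps d a b z)
    (ρ : B →ₐ[K] End K V) {i : Fin r} {β : K} (hβ : ρ ((b i : B) ^ l) = β • 1) (k : Fin r → ℕ) :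
    hB.monomialVector ρ v₀ (k + Pi.single i l) = β • hB.monomialVector ρ v₀ k := by
  rw [monomialVector, monomialVector, commMonomial_add, commMonomial_single, map_mul,
    Module.End.mul_apply, hβ, LinearMap.smul_apply, Module.End.one_apply, map_smul]

theorem monomialVector_ne_zero (hB : TwistedLaurentGenerators eps d a b z)
    (ρ : B →ₐ[K] End K V) (hv₀ : v₀ ≠ 0) (k : Fin r → ℕ) : hB.monomialVector ρ v₀ k ≠ 0 :=
  fun h => hv₀ <| ((Module.End.isUnit_iff _).mp ((isUnit_commMonomial hB.commute_bb
    (fun i => (b i).isUnit) k).map ρ)).injective (h.trans (map_zero _).symm)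

theorem b_apply_monomialVector_fin [NeZero l] (hB : TwistedLaurentGenerators eps d a b z)
    (ρ : B →ₐ[K] End K V) {i : Fin r} {β : K} (hβ : ρ ((b i : B) ^ l) = β • 1)
    (k : Fin r → Fin l) :
    ρ (b i) (hB.monomialVector ρ v₀ (Fin.val ∘ k)) = (if (k i : ℕ) + 1 = l then β else 1) •
      hB.monomialVector ρ v₀ (Fin.val ∘ (k + Pi.single i 1)) := by
  rw [b_apply_monomialVector, Fin.val_comp_add_single_one]
  split_ifs
  · exact hB.monomialVector_add_single ρ hβ _
  · rw [Pi.single_zero, add_zero, one_smul]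

theorem span_monomialVector_eq_top [FiniteDimensional K V] [NeZero l]
    (hB : TwistedLaurentGenerators eps d a b z) (ρ : B →ₐ[K] End K V) (hρ : IsIrreducibleRep ρ)
    (hv₀ : v₀ ≠ 0) (hν : ∀ i, ρ (a i) v₀ = ν i • v₀) {β : Fin r → K}
    (hβ : ∀ i, ρ ((b i : B) ^ l) = β i • 1) {α : Fin t → K} (hα : ∀ j, ρ (z j) = α j • 1) :
    Submodule.span K (Set.range fun k : Fin r → Fin l => hB.monomialVector ρ v₀ (Fin.val ∘ k)) =
      ⊤ := by
  set S := Submodule.span K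
    (Set.range fun k : Fin r → Fin l => hB.monomialVector ρ v₀ (Fin.val ∘ k))
  have mem (k : Fin r → Fin l) (c : K) : c • hB.monomialVector ρ v₀ (Fin.val ∘ k) ∈ S :=
    S.smul_mem c (Submodule.subset_span ⟨k, rfl⟩)
  have mem_invariant (x : B) (hx : ∀ k, ρ x (hB.monomialVector ρ v₀ (Fin.val ∘ k)) ∈ S) :
      x ∈ invariantSubalgebra ρ S :=
    Submodule.span_le.mpr (Set.range_subset_iff.mpr hx)
  have htop : invariantSubalgebra ρ S = ⊤ :=
    hB.eq_top_of_units_mem (units_inv_mem_invariantSubalgebra ρ S)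
      (fun i => mem_invariant _ fun k => by rw [hB.a_apply_monomialVector ρ hν]; exact mem k _)
      (fun i => mem_invariant _ fun k => by
        rw [hB.b_apply_monomialVector_fin ρ (hβ i)]; exact mem _ _)
      (fun j => mem_invariant _ fun k => by
        rw [hα, LinearMap.smul_apply, Module.End.one_apply]; exact mem k _)
  refine (hρ S fun x => Algebra.eq_top_iff.mp htop x).resolve_left fun hbot => ?_
  refine hB.monomialVector_ne_zero ρ hv₀ (Fin.val ∘ (0 : Fin r → Fin l)) ?_
  exact (Submodule.mem_bot K).mp (hbot ▸ Submodule.subset_span ⟨0, rfl⟩)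

theorem linearIndependent_monomialVector (hB : TwistedLaurentGenerators eps d a b z)
    (ρ : B →ₐ[K] End K V) (hprim : IsPrimitiveRoot eps l) (hd : ∀ i, (d i).Coprime l)
    (hv₀ : v₀ ≠ 0) (hν : ∀ i, ρ (a i) v₀ = ν i • v₀) :
    LinearIndependent K fun k : Fin r → Fin l => hB.monomialVector ρ v₀ (Fin.val ∘ k) := by
  refine Module.End.linearIndependent_of_joint_eigenvectors (fun i => ρ (a i))
    (fun i j => (hB.commute_aa i j).map ρ) (fun k i => (eps ^ d i) ^ (k i : ℕ) * ν i) ?_ _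
    (fun k => hB.monomialVector_ne_zero ρ hv₀ _) fun k i => hB.a_apply_monomialVector ρ hν i _
  intro k k' h
  funext i
  exact Fin.ext <| (hprim.pow_of_coprime _ (hd i)).pow_inj (k i).2 (k' i).2 <|
    mul_right_cancel₀ (ne_zero_of_units_apply_eq_smul ρ (a i) hv₀ (hν i)) (congrFun h i)

theorem finrank_eq_pow [IsAlgClosed K] [FiniteDimensional K V] [Nontrivial V] [NeZero l]
    (hB : TwistedLaurentGenerators eps d a b z) (ρ : B →ₐ[K] End K V)
    (hprim : IsPrimitiveRoot eps l) (hd : ∀ i, (d i).Coprime l) (hρ : IsIrreducibleRep ρ) :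
    finrank K V = l ^ r := by
  obtain ⟨v₀, hv₀, ν, hν⟩ := Module.End.exists_common_eigenvector (fun i => ρ (a i))
    fun i j => (hB.commute_aa i j).map ρ
  choose β hβ using fun i => hρ.exists_eq_smul_one (hB.b_pow_mem_center hprim i)
  choose α hα using fun j => hρ.exists_eq_smul_one (hB.z_mem_center j)
  rw [finrank_eq_card_basis (Basis.mk (hB.linearIndependent_monomialVector ρ hprim hd hv₀ hν)
    (hB.span_monomialVector_eq_top ρ hρ hv₀ hν hβ hα).ge)]
  simp

theorem exists_eigenvector_of_pow_eq [IsAlgClosed K] [FiniteDimensional K V] [Nontrivial V]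
    [NeZero l] (hB : TwistedLaurentGenerators eps d a b z) (ρ : B →ₐ[K] End K V)
    (hprim : IsPrimitiveRoot eps l) (hd : ∀ i, (d i).Coprime l) (μ : Fin r → K)
    (hμ : ∀ i, ρ ((a i : B) ^ l) = μ i ^ l • 1) :
    ∃ v : V, v ≠ 0 ∧ ∀ i, ρ (a i) v = μ i • v := by
  obtain ⟨v₀, hv₀, ν, hν⟩ := Module.End.exists_common_eigenvector (fun i => ρ (a i))
    fun i j => (hB.commute_aa i j).map ρ
  have hν0 i : ν i ≠ 0 := ne_zero_of_units_apply_eq_smul ρ (a i) hv₀ (hν i)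
  have hroot i : ∃ k < l, (eps ^ d i) ^ k = μ i / ν i := by
    refine (hprim.pow_of_coprime _ (hd i)).eq_pow_of_pow_eq_one ?_
    have h := apply_pow_eq_pow_smul ρ (hν i) l
    rw [hμ, LinearMap.smul_apply, Module.End.one_apply] at h
    rw [div_pow, smul_left_injective K hv₀ h, div_self (pow_ne_zero _ (hν0 i))]
  choose k _ hk using hroot
  exact ⟨hB.monomialVector ρ v₀ k, hB.monomialVector_ne_zero ρ hv₀ k, fun i => by
    rw [hB.a_apply_monomialVector ρ hν, hk, div_mul_cancel₀ _ (hν0 i)]⟩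

theorem intertwines_of_generators (hB : TwistedLaurentGenerators eps d a b z)
    {ρ : B →ₐ[K] End K V} {σ : B →ₐ[K] End K W} (e : V ≃ₗ[K] W)
    (ha : ∀ i, e.toLinearMap ∘ₗ ρ (a i) = σ (a i) ∘ₗ e.toLinearMap)
    (hb : ∀ i, e.toLinearMap ∘ₗ ρ (b i) = σ (b i) ∘ₗ e.toLinearMap)
    (hz : ∀ j, e.toLinearMap ∘ₗ ρ (z j) = σ (z j) ∘ₗ e.toLinearMap) (x : B) (v : V) :
    e (ρ x v) = σ x (e v) := by
  let T := AlgHom.equalizer ((e.conjAlgEquiv K : End K V →ₐ[K] End K W).comp ρ) σ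
  have mem {y : B} (hy : e.toLinearMap ∘ₗ ρ y = σ y ∘ₗ e.toLinearMap) : y ∈ T := by
    show e.toLinearMap ∘ₗ ρ y ∘ₗ e.symm.toLinearMap = σ y
    rw [← LinearMap.comp_assoc, hy, LinearMap.comp_assoc, e.comp_symm, LinearMap.comp_id]
  have htop : T = ⊤ := hB.eq_top_of_units_mem (fun u => AlgHom.units_inv_mem_equalizer u)
    (fun i => mem (ha i)) (fun i => mem (hb i)) fun j => mem (hz j)
  have hx : e.toLinearMap ∘ₗ ρ x ∘ₗ e.symm.toLinearMap = σ x := Algebra.eq_top_iff.mp htop x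
  simpa using LinearMap.congr_fun hx (e v)

theorem exists_linearEquiv_of_eigenvector [IsAlgClosed K] [FiniteDimensional K V]
    [FiniteDimensional K W] [Nontrivial W] [NeZero l] (hB : TwistedLaurentGenerators eps d a b z)
    (hprim : IsPrimitiveRoot eps l) (hd : ∀ i, (d i).Coprime l) {ρ : B →ₐ[K] End K V}
    {σ : B →ₐ[K] End K W} (hρ : IsIrreducibleRep ρ) (hσ : IsIrreducibleRep σ)
    (hχ : ∀ x ∈ Subalgebra.center K B, ∀ c : K, σ x = c • 1 → ρ x = c • 1)
    {w : W} (hv₀ : v₀ ≠ 0) (hw : w ≠ 0)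
    (hνv : ∀ i, ρ (a i) v₀ = ν i • v₀) (hνw : ∀ i, σ (a i) w = ν i • w) :
    ∃ e : V ≃ₗ[K] W, ∀ (x : B) (v : V), e (ρ x v) = σ x (e v) := by
  choose β hβ using fun i => hσ.exists_eq_smul_one (hB.b_pow_mem_center hprim i)
  choose α hα using fun j => hσ.exists_eq_smul_one (hB.z_mem_center j)
  have hβρ i := hχ _ (hB.b_pow_mem_center hprim i) _ (hβ i)
  have hαρ j := hχ _ (hB.z_mem_center j) _ (hα j)
  let basV := Basis.mk (hB.linearIndependent_monomialVector ρ hprim hd hv₀ hνv)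
    (hB.span_monomialVector_eq_top ρ hρ hv₀ hνv hβρ hαρ).ge
  let basW := Basis.mk (hB.linearIndependent_monomialVector σ hprim hd hw hνw)
    (hB.span_monomialVector_eq_top σ hσ hw hνw hβ hα).ge
  let e := basV.equiv basW (Equiv.refl _)
  have he (k : Fin r → Fin l) :
      e (hB.monomialVector ρ v₀ (Fin.val ∘ k)) = hB.monomialVector σ w (Fin.val ∘ k) := by
    simpa [basV, basW] using basV.equiv_apply k basW (Equiv.refl _)
  -- in the two bases every generator has the same matrix
  refine ⟨e, hB.intertwines_of_generators e (fun i => basV.ext fun k => ?_)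
    (fun i => basV.ext fun k => ?_) (fun j => basV.ext fun k => ?_)⟩
  all_goals simp only [basV, Basis.mk_apply, LinearMap.comp_apply, LinearEquiv.coe_coe]
  · rw [he, hB.a_apply_monomialVector ρ hνv, hB.a_apply_monomialVector σ hνw, map_smul, he]
  · rw [he, hB.b_apply_monomialVector_fin ρ (hβρ i), hB.b_apply_monomialVector_fin σ (hβ i),
      map_smul, he]
  · simp [hα, hαρ, he]

end Representations

end TwistedLaurentGenerators

theorem irreducible_reps_of_twisted_laurent_general
    {K B : Type*} [Field K] [IsAlgClosed K] [Ring B] [Algebra K B]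
    (l : ℕ) (hl : 0 < l) (eps : K) (hprim : IsPrimitiveRoot eps l)
    (r t : ℕ) (a b : Fin r → Bˣ) (z : Fin t → Bˣ)
    (d : Fin r → ℕ) (hd : ∀ i, Nat.Coprime (d i) l)
    (hrel : ∀ i, (a i : B) * (b i : B) = eps ^ (d i) • ((b i : B) * (a i : B)))
    (hab : ∀ i j, i ≠ j → Commute (a i : B) (b j : B))
    (haa : ∀ i j, Commute (a i : B) (a j : B))
    (hbb : ∀ i j, Commute (b i : B) (b j : B))
    (hza : ∀ j i, Commute (z j : B) (a i : B))
    (hzb : ∀ j i, Commute (z j : B) (b i : B))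
    (hzz : ∀ j j', Commute (z j : B) (z j' : B))
    (hgen : Algebra.adjoin K
      (Set.range (fun i => ((a i : Bˣ) : B)) ∪ Set.range (fun i => (((a i)⁻¹ : Bˣ) : B)) ∪
       Set.range (fun i => ((b i : Bˣ) : B)) ∪ Set.range (fun i => (((b i)⁻¹ : Bˣ) : B)) ∪
       Set.range (fun j => ((z j : Bˣ) : B)) ∪ Set.range (fun j => (((z j)⁻¹ : Bˣ) : B)))
      = ⊤)
    {V₁ V₂ : Type*} [AddCommGroup V₁] [Module K V₁] [FiniteDimensional K V₁]
    [Nontrivial V₁] [AddCommGroup V₂] [Module K V₂] [FiniteDimensional K V₂]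
    [Nontrivial V₂]
    (ρ₁ : B →ₐ[K] Module.End K V₁) (ρ₂ : B →ₐ[K] Module.End K V₂)
    (hirr₁ : ∀ W : Submodule K V₁, (∀ x : B, ∀ v ∈ W, ρ₁ x v ∈ W) → W = ⊥ ∨ W = ⊤)
    (hirr₂ : ∀ W : Submodule K V₂, (∀ x : B, ∀ v ∈ W, ρ₂ x v ∈ W) → W = ⊥ ∨ W = ⊤) :
    Module.finrank K V₁ = l ^ r ∧
    ((∀ x : B, x ∈ Subalgebra.center K B → ∀ c : K,
        (ρ₁ x = c • (1 : Module.End K V₁) ↔ ρ₂ x = c • (1 : Module.End K V₂))) →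
      ∃ e : V₁ ≃ₗ[K] V₂, ∀ (x : B) (v : V₁), e (ρ₁ x v) = ρ₂ x (e v)) := by
  have hB : TwistedLaurentGenerators eps d a b z := ⟨hrel, hab, haa, hbb, hza, hzb, hzz, hgen⟩
  have : NeZero l := ⟨hl.ne'⟩
  refine ⟨hB.finrank_eq_pow ρ₁ hprim hd hirr₁, fun hχ => ?_⟩
  obtain ⟨v₂, hv₂, μ, hμ⟩ := Module.End.exists_common_eigenvector (fun i => ρ₂ (a i))
    fun i j => (haa i j).map ρ₂
  have hμ₁ i : ρ₁ ((a i : B) ^ l) = μ i ^ l • 1 := (hχ _ (hB.a_pow_mem_center hprim i) _).2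
    (IsIrreducibleRep.apply_pow_eq_smul_one hirr₂ (hB.a_pow_mem_center hprim i) hv₂ (hμ i))
  obtain ⟨v₁, hv₁, hμv₁⟩ := hB.exists_eigenvector_of_pow_eq ρ₁ hprim hd μ hμ₁
  exact hB.exists_linearEquiv_of_eigenvector hprim hd hirr₁ hirr₂ (fun x hx c => (hχ x hx c).2)
    hv₁ hv₂ hμv₁ hμ

/-- Over an algebraically closed field `K`, every irreducible finite-dimensional
representation of the twisted Laurent polynomial algebra `B_ε` (relations
`y_{2i-1} y_{2i} = ε^{d_i} y_{2i} y_{2i-1}`, `gcd(d_i,l)=1`, other pairs commuting)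
has dimension exactly `l^r`, and is uniquely determined by its central character. -/
theorem irreducible_reps_of_twisted_laurent
    {K B : Type*} [Field K] [IsAlgClosed K] [Ring B] [Algebra K B]
    (l : ℕ) (hl : 0 < l) (eps : K) (hprim : IsPrimitiveRoot eps l)
    (r t : ℕ) (a b : Fin r → Bˣ) (z : Fin t → Bˣ)
    (d : Fin r → ℕ) (hd : ∀ i, Nat.Coprime (d i) l)
    (hrel : ∀ i, (a i : B) * (b i : B) = eps ^ (d i) • ((b i : B) * (a i : B)))
    (hab : ∀ i j, i ≠ j → Commute (a i : B) (b j : B))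
    (haa : ∀ i j, Commute (a i : B) (a j : B))
    (hbb : ∀ i j, Commute (b i : B) (b j : B))
    (hza : ∀ j i, Commute (z j : B) (a i : B))
    (hzb : ∀ j i, Commute (z j : B) (b i : B))
    (hzz : ∀ j j', Commute (z j : B) (z j' : B))
    (hgen : Algebra.adjoin K
      (Set.range (fun i => ((a i : Bˣ) : B)) ∪ Set.range (fun i => (((a i)⁻¹ : Bˣ) : B)) ∪
       Set.range (fun i => ((b i : Bˣ) : B)) ∪ Set.range (fun i => (((b i)⁻¹ : Bˣ) : B)) ∪
       Set.range (fun j => ((z j : Bˣ) : B)) ∪ Set.range (fun j => (((z j)⁻¹ : Bˣ) : B)))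
      = ⊤)
    (hbasis : LinearIndependent K
      (fun m : (Fin r → ℤ) × (Fin r → ℤ) × (Fin t → ℤ) =>
        (List.ofFn fun i => ((a i ^ m.1 i : Bˣ) : B)).prod *
        (List.ofFn fun i => ((b i ^ m.2.1 i : Bˣ) : B)).prod *
        (List.ofFn fun j => ((z j ^ m.2.2 j : Bˣ) : B)).prod))
    {V₁ V₂ : Type*} [AddCommGroup V₁] [Module K V₁] [FiniteDimensional K V₁]
    [Nontrivial V₁] [AddCommGroup V₂] [Module K V₂] [FiniteDimensional K V₂]
    [Nontrivial V₂]
    (ρ₁ : B →ₐ[K] Module.End K V₁) (ρ₂ : B →ₐ[K] Module.End K V₂)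
    (hirr₁ : ∀ W : Submodule K V₁, (∀ x : B, ∀ v ∈ W, ρ₁ x v ∈ W) → W = ⊥ ∨ W = ⊤)
    (hirr₂ : ∀ W : Submodule K V₂, (∀ x : B, ∀ v ∈ W, ρ₂ x v ∈ W) → W = ⊥ ∨ W = ⊤) :
    Module.finrank K V₁ = l ^ r ∧
    ((∀ x : B, x ∈ Subalgebra.center K B → ∀ c : K,
        (ρ₁ x = c • (1 : Module.End K V₁) ↔ ρ₂ x = c • (1 : Module.End K V₂))) →
      ∃ e : V₁ ≃ₗ[K] V₂, ∀ (x : B) (v : V₁), e (ρ₁ x v) = ρ₂ x (e v)) :=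
  irreducible_reps_of_twisted_laurent_general l hl eps hprim r t a b z d hd hrel hab haa hbb hza hzb
    hzz hgen ρ₁ ρ₂ hirr₁ hirr₂
end

section
/- Let A be a commutative affine Poisson ℂ-algebra and B ⊆ A a Poisson subalgebra such that A is a finite B-module. Then rank(A) = rank(B), where rank of a Poisson algebra is the maximum over points x of Maxspec of the rank of the Poisson structure matrix at x. -/
/-!
Rank at a point is detected by minors: `k ≤ rank` iff some `k × k` minor is nonzero there, and
by the Nullstellensatz an element that is not nilpotent is nonzero at some `ℂ`-point. The
columns of the structure matrix `({u_i, u_j})` are the values of the Hamiltonian derivations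
`{u_i, -}` on the `u_j`; since the matrix is skew, it suffices to compare these values.

`rank B ≤ rank A`: a minor of the matrix of `B` nonzero at a point of `B` is not nilpotent, so it
is nonzero at some point `x` of `A`; at `x` derivation values on elements of `B` are spanned by
those on generators of `A`.

`rank A ≤ rank B`: for a point `x` of `A` pick a minimal prime `p ⊆ ker x` and pass to the
fraction field `K` of `A ⧸ p`, which can only increase the rank. In characteristic zero
derivations preserve minimal primes (Seidenberg). Every `a ∈ A` is integral over `B`, so some
`g` with coefficients in `B` has `g(a) ∈ p` and `g'(a) ∉ p` (take `g` of least degree modulo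
`p`); differentiating `g(a)` expresses the derivation values of `a` over `K` through those of
elements of `B`. The resulting minor of the matrix of `B`, nonzero over `K`, is not nilpotent
and so is nonzero at a point of `B`.
-/

open Polynomial

section LinearAlgebra

variable {K : Type*} [Field K]

theorem exists_linearIndependent_comp_of_le_finrank_span {ι V : Type*} [Finite ι]
    [AddCommGroup V] [Module K V] (v : ι → V) {k : ℕ}
    (h : k ≤ Module.finrank K (Submodule.span K (Set.range v))) :
    ∃ r : Fin k → ι, LinearIndependent K (v ∘ r) := by
  obtain ⟨κ, a, ha, hspan, hli⟩ := exists_linearIndependent' K v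
  have : Finite κ := Finite.of_injective a ha
  have := Fintype.ofFinite κ
  rw [← hspan, finrank_span_eq_card hli] at h
  obtain ⟨e⟩ :=
    Function.Embedding.nonempty_of_card_le (α := Fin k) (β := κ) (by simpa using h)
  exact ⟨a ∘ e, hli.comp e e.injective⟩

namespace Matrix

theorem rank_neg {R m n : Type*} [CommRing R] [Fintype n] (M : Matrix m n R) :
    (-M).rank = M.rank := by
  simpa using M.rank_smul_of_mem_nonZeroDivisors isUnit_one.neg.mem_nonZeroDivisors

variable {m n : Type*} [Fintype m] [Fintype n]

theorem rank_le_rank_of_col_mem_span {n' : Type*} [Fintype n'] (M : Matrix m n K)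
    (N : Matrix m n' K) (h : ∀ j, M.col j ∈ Submodule.span K (Set.range N.col)) :
    M.rank ≤ N.rank := by
  rw [rank_eq_finrank_span_cols, rank_eq_finrank_span_cols]
  exact Submodule.finrank_mono (Submodule.span_le.2 (Set.range_subset_iff.2 h))

theorem le_rank_iff_exists_det_submatrix_ne_zero (M : Matrix m n K) {k : ℕ} :
    k ≤ M.rank ↔ ∃ (r : Fin k → m) (c : Fin k → n), (M.submatrix r c).det ≠ 0 := by
  constructor
  · intro h
    rw [rank_eq_finrank_span_row] at h
    obtain ⟨r, hr⟩ := exists_linearIndependent_comp_of_le_finrank_span M.row h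
    have hr' : LinearIndependent K (M.submatrix r id) := hr
    have hcols : k ≤ Module.finrank K (Submodule.span K (Set.range (M.submatrix r id).col)) := by
      rw [← rank_eq_finrank_span_cols]
      exact (hr'.rank_matrix.trans (Fintype.card_fin k)).ge
    obtain ⟨c, hc⟩ := exists_linearIndependent_comp_of_le_finrank_span _ hcols
    refine ⟨r, c, ?_⟩
    rw [← isUnit_iff_ne_zero, ← isUnit_iff_isUnit_det, ← linearIndependent_cols_iff_isUnit]
    exact hc
  · rintro ⟨r, c, hrc⟩
    calc k = (M.submatrix r c).rank := by rw [rank_of_det_ne_zero hrc, Fintype.card_fin]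
      _ ≤ M.rank := rank_submatrix_le M r c

variable {R L : Type*} [CommRing R] [Field L]

theorem le_rank_map_iff (M : Matrix m n R) (f : R →+* K) {k : ℕ} :
    k ≤ (M.map f).rank ↔
      ∃ (r : Fin k → m) (c : Fin k → n), f (M.submatrix r c).det ≠ 0 := by
  simp only [le_rank_iff_exists_det_submatrix_ne_zero, submatrix_map, RingHom.map_det,
    RingHom.mapMatrix_apply]

theorem rank_map_le_rank_map_of_ker_le (M : Matrix m n R) {f : R →+* K} {g : R →+* L}
    (h : RingHom.ker g ≤ RingHom.ker f) : (M.map f).rank ≤ (M.map g).rank := by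
  obtain ⟨r, c, hrc⟩ := (le_rank_map_iff M f).1 le_rfl
  exact (le_rank_map_iff M g).2 ⟨r, c, fun h0 => hrc (h h0)⟩

end Matrix

end LinearAlgebra

section Nullstellensatz

variable {k A : Type*} [Field k] [IsAlgClosed k] [CommRing A] [Algebra k A]
  [Algebra.FiniteType k A]

theorem exists_algHom_apply_ne_zero_of_not_isNilpotent {a : A} (ha : ¬IsNilpotent a) :
    ∃ x : A →ₐ[k] k, x a ≠ 0 := by
  have : IsJacobsonRing A := isJacobsonRing_of_finiteType (A := k)
  have ha' : a ∉ (⊥ : Ideal A).jacobson := by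
    rw [← Ideal.radical_eq_jacobson]
    exact mt mem_nilradical.1 ha
  obtain ⟨m, ⟨-, hm⟩, ham⟩ : ∃ m : Ideal A, (⊥ ≤ m ∧ m.IsMaximal) ∧ a ∉ m := by
    simpa [Ideal.jacobson, Ideal.mem_sInf] using ha'
  let := Ideal.Quotient.field m
  have : Module.Finite k (A ⧸ m) := finite_of_finite_type_of_isJacobsonRing k (A ⧸ m)
  let e : k ≃ₐ[k] A ⧸ m :=
    AlgEquiv.ofBijective (Algebra.ofId k (A ⧸ m)) IsAlgClosed.algebraMap_bijective_of_isIntegral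
  refine ⟨(e.symm : A ⧸ m →ₐ[k] k).comp (Ideal.Quotient.mkₐ k m), ?_⟩
  simpa [Ideal.Quotient.eq_zero_iff_mem] using ham

theorem Matrix.exists_algHom_rank_map_le {R K m n : Type*} [CommRing R] [Field K]
    [Fintype m] [Fintype n] (M : Matrix m n R) (π : R →+* K) {φ : R →+* A}
    (hφ : Function.Injective φ) :
    ∃ x : A →ₐ[k] k, (M.map π).rank ≤ (M.map ((x : A →+* k).comp φ)).rank := by
  obtain ⟨r, c, hrc⟩ := (le_rank_map_iff M π).1 le_rfl
  have hnil : ¬IsNilpotent (φ (M.submatrix r c).det) := fun h =>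
    hrc (isNilpotent_iff_eq_zero.1 (((IsNilpotent.map_iff hφ).1 h).map π))
  obtain ⟨x, hx⟩ := exists_algHom_apply_ne_zero_of_not_isNilpotent (k := k) hnil
  exact ⟨x, (le_rank_map_iff M _).2 ⟨r, c, hx⟩⟩

end Nullstellensatz

section MinimalPrimes

variable {A : Type*} [CommRing A]

theorem exists_notMem_mul_pow_eq_zero_of_mem_minimalPrimes {p : Ideal A}
    (hp : p ∈ minimalPrimes A) {a : A} (ha : a ∈ p) :
    ∃ s ∉ p, ∃ n : ℕ, s * a ^ n = 0 := by
  have := hp.1.1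
  have hrad := IsLocalization.AtPrime.radical_map_of_mem_minimalPrimes
    (Localization.AtPrime p) p ⊥ hp
  rw [Ideal.map_bot] at hrad
  obtain ⟨n, hn⟩ : algebraMap A (Localization.AtPrime p) a ∈ (⊥ : Ideal _).radical :=
    hrad ▸ Ideal.mem_map_of_mem _ ha
  rw [Ideal.mem_bot, ← map_pow, IsLocalization.map_eq_zero_iff p.primeCompl] at hn
  obtain ⟨⟨s, hs⟩, hsn⟩ := hn
  exact ⟨s, hs, n, hsn⟩

/-- Seidenberg's theorem. -/
theorem Derivation.map_mem_of_mem_minimalPrimes {k : Type*} [Field k] [CharZero k]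
    [Algebra k A] (D : Derivation k A A) {p : Ideal A} (hp : p ∈ minimalPrimes A) {a : A}
    (ha : a ∈ p) : D a ∈ p := by
  have hprime := hp.1.1
  by_contra hDa
  -- From `s * a ^ (n + 1) = 0`, `s ∉ p` we get `(s ^ 2 * D a) * a ^ n = 0`, `s ^ 2 * D a ∉ p`.
  suffices ∀ n : ℕ, ∀ s ∉ p, s * a ^ n ≠ 0 by
    obtain ⟨s, hs, n, hsn⟩ := exists_notMem_mul_pow_eq_zero_of_mem_minimalPrimes hp ha
    exact this n s hs hsn
  intro n
  induction n with
  | zero => exact fun s hs h0 => hs (by rw [pow_zero, mul_one] at h0; exact h0 ▸ p.zero_mem)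
  | succ n ih =>
    intro s hs h0
    have hunit : IsUnit ((n + 1 : ℕ) : A) := by
      simpa using (isUnit_iff_ne_zero.2 (Nat.cast_add_one_ne_zero n : (n + 1 : k) ≠ 0)).map
        (algebraMap k A)
    refine ih (s ^ 2 * D a) (fun h => ?_) (hunit.mul_right_eq_zero.1 ?_)
    · rcases hprime.mem_or_mem h with h | h
      exacts [hs (hprime.mem_of_pow_mem 2 h), hDa h]
    · calc ((n + 1 : ℕ) : A) * (s ^ 2 * D a * a ^ n)
          = s * D (s * a ^ (n + 1)) - D s * (s * a ^ (n + 1)) := by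
            rw [D.leibniz, D.leibniz_pow, Nat.add_sub_cancel]
            simp only [smul_eq_mul, nsmul_eq_mul]
            ring
        _ = 0 := by rw [h0, map_zero, mul_zero, mul_zero, sub_zero]

end MinimalPrimes

theorem RingHom.IsIntegralElem.exists_eval₂_eq_zero_and_derivative_ne_zero {B K : Type*}
    [CommRing B] [Field K] [CharZero K] {φ : B →+* K} {θ : K} (hθ : φ.IsIntegralElem θ) :
    ∃ g : B[X], g.eval₂ φ θ = 0 ∧ g.derivative.eval₂ φ θ ≠ 0 := by
  suffices ∀ n (g : B[X]), (g.map φ).natDegree = n → g.map φ ≠ 0 → g.eval₂ φ θ = 0 →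
      ∃ g : B[X], g.eval₂ φ θ = 0 ∧ g.derivative.eval₂ φ θ ≠ 0 by
    obtain ⟨g, hmonic, hg⟩ := hθ
    exact this _ g rfl (hmonic.map φ).ne_zero hg
  intro n
  induction n using Nat.strong_induction_on with
  | _ n ih =>
    intro g hn hne hg
    by_cases hg' : g.derivative.eval₂ φ θ = 0
    · -- then pass to the derivative, which is nonzero of smaller degree
      have hdeg : (g.map φ).natDegree ≠ 0 :=
        (natDegree_pos_of_eval₂_root hne (RingHom.id K) (z := θ) (by rwa [← eval_map] at hg)
          fun _ h => h).ne'
      refine ih _ (hn ▸ natDegree_derivative_lt hdeg) g.derivative ?_ ?_ hg'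
      · rw [← derivative_map]
      · rwa [← derivative_map, Ne, derivative_eq_zero]
    · exact ⟨g, hg, hg'⟩

section DerivVector

variable {R A K ι : Type*} [CommRing R] [CommRing A] [Algebra R A] [Field K]

def derivVector (D : ι → Derivation R A A) (π : A →+* K) : A →+ (ι → K) :=
  AddMonoidHom.pi fun i => π.toAddMonoidHom.comp (D i).toAddMonoidHom

variable {D : ι → Derivation R A A} {π : A →+* K}

@[simp]
theorem derivVector_apply (a : A) (i : ι) : derivVector D π a i = π (D i a) := rfl

theorem derivVector_mul (a b : A) :
    derivVector D π (a * b) = π a • derivVector D π b + π b • derivVector D π a := by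
  ext i; simp

theorem derivVector_pow (a : A) (e : ℕ) :
    derivVector D π (a ^ e) = (e * π a ^ (e - 1)) • derivVector D π a := by
  ext i; simp [Derivation.leibniz_pow, mul_assoc]

theorem derivVector_algebraMap (r : R) : derivVector D π (algebraMap R A r) = 0 := by
  ext i; simp

theorem derivVector_eval (f : A[X]) (a : A) :
    derivVector D π (f.eval a) =
      π (f.derivative.eval a) • derivVector D π a +
        f.sum fun e b => π a ^ e • derivVector D π b := by
  rw [eval_eq_sum, derivative_eval, Polynomial.sum, Polynomial.sum, Polynomial.sum, map_sum,
    map_sum, Finset.sum_smul, ← Finset.sum_add_distrib]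
  refine Finset.sum_congr rfl fun e _ => ?_
  rw [derivVector_mul, derivVector_pow, smul_smul]
  simp only [map_mul, map_pow, map_natCast, mul_assoc]

theorem derivVector_mem_span_of_mem_adjoin {S : Set A} {a : A} (ha : a ∈ Algebra.adjoin R S) :
    derivVector D π a ∈ Submodule.span K (derivVector D π '' S) := by
  induction ha using Algebra.adjoin_induction with
  | mem x hx => exact Submodule.subset_span ⟨x, hx, rfl⟩
  | algebraMap r => simp [derivVector_algebraMap]
  | add x y _ _ hx hy => rw [map_add]; exact add_mem hx hy
  | mul x y _ _ hx hy =>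
    rw [derivVector_mul]; exact add_mem (Submodule.smul_mem _ _ hy) (Submodule.smul_mem _ _ hx)

/-- Apply the derivations to `f(a) ∈ ker π`, where `f` has coefficients in `B` and
`π (f' a) ≠ 0`. -/
theorem derivVector_mem_span_of_isIntegral [CharZero K]
    (hD : ∀ a ∈ RingHom.ker π, derivVector D π a = 0) {B : Subalgebra R A} {a : A}
    (ha : IsIntegral B a) : derivVector D π a ∈ Submodule.span K (derivVector D π '' B) := by
  obtain ⟨g, hg, hg'⟩ : ∃ g : B[X], g.eval₂ (π.comp (algebraMap B A)) (π a) = 0 ∧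
      g.derivative.eval₂ (π.comp (algebraMap B A)) (π a) ≠ 0 := by
    refine RingHom.IsIntegralElem.exists_eval₂_eq_zero_and_derivative_ne_zero ?_
    obtain ⟨g, hmonic, hg⟩ := ha
    exact ⟨g, hmonic, by rw [← hom_eval₂, hg, map_zero]⟩
  set f : A[X] := g.map (algebraMap B A)
  have hf : derivVector D π (f.eval a) = 0 :=
    hD _ (by rwa [RingHom.mem_ker, eval_map, hom_eval₂])
  rw [derivVector_eval, ← eq_neg_iff_add_eq_zero] at hf
  have hc : π (f.derivative.eval a) ≠ 0 := by
    rwa [derivative_map, eval_map, hom_eval₂]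
  rw [← inv_smul_smul₀ hc (derivVector D π a), hf]
  refine Submodule.smul_mem _ _ (Submodule.neg_mem _ (Submodule.sum_mem _ fun e _ => ?_))
  refine Submodule.smul_mem _ _ (Submodule.subset_span ⟨_, ?_, rfl⟩)
  rw [coeff_map]
  exact (g.coeff e).2

end DerivVector

/-- The axioms of a Poisson bracket other than the Jacobi identity. -/
structure IsSkewBiderivation (R : Type*) {A : Type*} [CommRing R] [CommRing A] [Algebra R A]
    (P : A → A → A) : Prop where
  add_left : ∀ x y z : A, P (x + y) z = P x z + P y z
  smul_left : ∀ (c : R) (x y : A), P (c • x) y = c • P x y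
  skew : ∀ x y : A, P x y = -P y x
  leibniz : ∀ x y z : A, P x (y * z) = P x y * z + y * P x z

def poissonMatrix {A ι κ : Type*} (P : A → A → A) (u : ι → A) (v : κ → A) :
    Matrix ι κ A :=
  Matrix.of fun i j => P (u i) (v j)

section Poisson

variable {R A K : Type*} [CommRing R] [CommRing A] [Algebra R A] [Field K] {P : A → A → A}

theorem rank_map_poissonMatrix_swap (hskew : ∀ x y : A, P x y = -P y x) (π : A →+* K)
    {ι κ : Type*} [Fintype ι] [Fintype κ] (u : ι → A) (v : κ → A) :
    ((poissonMatrix P v u).map π).rank = ((poissonMatrix P u v).map π).rank := by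
  have : (poissonMatrix P v u).map π = -((poissonMatrix P u v).map π).transpose := by
    ext i j
    simp [poissonMatrix, hskew (v i)]
  rw [this, Matrix.rank_neg, Matrix.rank_transpose]

namespace IsSkewBiderivation

def derivation (hP : IsSkewBiderivation R P) (a : A) : Derivation R A A :=
  Derivation.mk'
    { toFun := P a
      map_add' := fun x y => by rw [hP.skew, hP.add_left, neg_add, ← hP.skew, ← hP.skew]
      map_smul' := fun c x => by rw [hP.skew, hP.smul_left, ← smul_neg, ← hP.skew]; rfl }
    fun x y => by
      simp only [LinearMap.coe_mk, AddHom.coe_mk, hP.leibniz, smul_eq_mul]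
      ring

/-- The `j`-th column of `(poissonMatrix P u v).map π` is the `derivVector` of `v j` for the
Hamiltonian derivations of the `u i`. -/
theorem rank_map_poissonMatrix_le_of_mem_span (hP : IsSkewBiderivation R P) (π : A →+* K)
    {k l l' : ℕ} (u : Fin k → A) (v : Fin l → A) (w : Fin l' → A)
    (h : ∀ j, derivVector (hP.derivation ∘ u) π (v j) ∈
      Submodule.span K (derivVector (hP.derivation ∘ u) π '' Set.range w)) :
    ((poissonMatrix P u v).map π).rank ≤ ((poissonMatrix P u w).map π).rank :=
  Matrix.rank_le_rank_of_col_mem_span _ _ fun j => by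
    have := h j
    rwa [← Set.range_comp] at this

theorem rank_map_poissonMatrix_le (hP : IsSkewBiderivation R P) (π : A →+* K) {k l : ℕ}
    (u : Fin k → A) (w : Fin l → A)
    (h : ∀ {s : ℕ} (d : Fin s → A) (i : Fin k), derivVector (hP.derivation ∘ d) π (u i) ∈
      Submodule.span K (derivVector (hP.derivation ∘ d) π '' Set.range w)) :
    ((poissonMatrix P u u).map π).rank ≤ ((poissonMatrix P w w).map π).rank :=
  calc ((poissonMatrix P u u).map π).rank
      ≤ ((poissonMatrix P u w).map π).rank :=
        hP.rank_map_poissonMatrix_le_of_mem_span π u u w (h u)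
    _ = ((poissonMatrix P w u).map π).rank := (rank_map_poissonMatrix_swap hP.skew π u w).symm
    _ ≤ ((poissonMatrix P w w).map π).rank :=
        hP.rank_map_poissonMatrix_le_of_mem_span π w u w (h w)

theorem rank_map_poissonMatrix_le_of_adjoin_eq_top (hP : IsSkewBiderivation R P) (π : A →+* K)
    {k l : ℕ} (u : Fin k → A) {w : Fin l → A} (hw : Algebra.adjoin R (Set.range w) = ⊤) :
    ((poissonMatrix P u u).map π).rank ≤ ((poissonMatrix P w w).map π).rank :=
  hP.rank_map_poissonMatrix_le π u w fun _ _ =>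
    derivVector_mem_span_of_mem_adjoin (hw ▸ Algebra.mem_top)

end IsSkewBiderivation

theorem IsSkewBiderivation.rank_map_poissonMatrix_le_of_isIntegral {k : Type*} [Field k]
    [CharZero k] [Algebra k A] (hP : IsSkewBiderivation k P) {π : A →+* K}
    (hπ : RingHom.ker π ∈ minimalPrimes A) {B : Subalgebra k A} [Algebra.IsIntegral B A]
    {m l : ℕ} (u : Fin m → A) {w : Fin l → A} (hw : Algebra.adjoin k (Set.range w) = B) :
    ((poissonMatrix P u u).map π).rank ≤ ((poissonMatrix P w w).map π).rank := by
  have : CharZero K := charZero_of_injective_ringHom (π.comp (algebraMap k A)).injective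
  refine hP.rank_map_poissonMatrix_le π u w fun d i => ?_
  have hD : ∀ a ∈ RingHom.ker π, derivVector (hP.derivation ∘ d) π a = 0 := fun a ha =>
    funext fun j => (hP.derivation (d j)).map_mem_of_mem_minimalPrimes hπ ha
  refine Submodule.span_le.2 ?_ (derivVector_mem_span_of_isIntegral hD
    (Algebra.IsIntegral.isIntegral (R := B) (u i)))
  rintro _ ⟨b, hb, rfl⟩
  exact derivVector_mem_span_of_mem_adjoin (hw ▸ hb)

section Points

variable {k : Type*} [Field k] [IsAlgClosed k] [Algebra k A] [Algebra.FiniteType k A]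
  {B : Subalgebra k A} {m : ℕ}

theorem IsSkewBiderivation.exists_rank_ge_of_adjoin_eq_top (hP : IsSkewBiderivation k P)
    (MB : Matrix (Fin m) (Fin m) B) {w : Fin m → A} (hMB : MB.map B.val = poissonMatrix P w w)
    {n : ℕ} {u : Fin n → A} (hu : Algebra.adjoin k (Set.range u) = ⊤) (y : B →ₐ[k] k) :
    ∃ x : A →ₐ[k] k, (MB.map y).rank ≤ ((poissonMatrix P u u).map x).rank := by
  obtain ⟨x, hx⟩ := MB.exists_algHom_rank_map_le (k := k) (y : B →+* k)
    (φ := B.val.toRingHom) Subtype.val_injective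
  refine ⟨x, hx.trans ?_⟩
  rw [RingHom.coe_comp, ← Matrix.map_map, show ⇑B.val.toRingHom = B.val from rfl, hMB]
  exact hP.rank_map_poissonMatrix_le_of_adjoin_eq_top (x : A →+* k) w hu

theorem IsSkewBiderivation.exists_rank_le_of_isIntegral [CharZero k]
    (hP : IsSkewBiderivation k P) [Algebra.IsIntegral B A] (MB : Matrix (Fin m) (Fin m) B)
    {w : Fin m → A} (hMB : MB.map B.val = poissonMatrix P w w)
    (hw : Algebra.adjoin k (Set.range w) = B) {n : ℕ} (u : Fin n → A) (x : A →ₐ[k] k) :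
    ∃ y : B →ₐ[k] k, ((poissonMatrix P u u).map x).rank ≤ (MB.map y).rank := by
  have := RingHom.ker_isPrime (x : A →+* k)
  obtain ⟨p, hp, hpx⟩ :=
    Ideal.exists_minimalPrimes_le (bot_le : ⊥ ≤ RingHom.ker (x : A →+* k))
  have := hp.1.1
  let π := (algebraMap (A ⧸ p) (FractionRing (A ⧸ p))).comp (Ideal.Quotient.mk p)
  have hπ : RingHom.ker π = p := by
    rw [RingHom.ker_comp_of_injective _ (IsFractionRing.injective _ _), Ideal.mk_ker]
  obtain ⟨x', hx'⟩ := MB.exists_algHom_rank_map_le (k := k) (π.comp B.val.toRingHom)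
    (φ := B.val.toRingHom) Subtype.val_injective
  refine ⟨x'.comp B.val, ?_⟩
  calc ((poissonMatrix P u u).map x).rank
      ≤ ((poissonMatrix P u u).map π).rank :=
        Matrix.rank_map_le_rank_map_of_ker_le _ (by rwa [hπ])
    _ ≤ ((poissonMatrix P w w).map π).rank :=
        hP.rank_map_poissonMatrix_le_of_isIntegral (by rwa [hπ]) u hw
    _ ≤ _ := by rwa [← hMB, Matrix.map_map]

end Points

end Poisson

theorem poisson_rank_eq_of_finite_general
    {A : Type*} [CommRing A] [Algebra ℂ A] [Algebra.FiniteType ℂ A]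
    (P : A → A → A)
    (hadd : ∀ x y z : A, P (x + y) z = P x z + P y z)
    (hsmul : ∀ (c : ℂ) (x y : A), P (c • x) y = c • P x y)
    (hanti : ∀ x y : A, P x y = - P y x)
    (hleib : ∀ x y z : A, P x (y * z) = P x y * z + y * P x z)
    (B : Subalgebra ℂ A)
    (hBP : ∀ x y : A, x ∈ B → y ∈ B → P x y ∈ B)
    [Module.Finite B A] :
    ∀ (n : ℕ) (aa : Fin n → A), Algebra.adjoin ℂ (Set.range aa) = ⊤ →
    ∀ (m : ℕ) (bb : Fin m → B), Algebra.adjoin ℂ (Set.range bb) = ⊤ →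
      sSup {k : ℕ | ∃ x : A →ₐ[ℂ] ℂ,
          (Matrix.of fun i j : Fin n => x (P (aa i) (aa j))).rank = k}
        = sSup {k : ℕ | ∃ y : B →ₐ[ℂ] ℂ,
            (Matrix.of fun i j : Fin m =>
              y ⟨P (bb i) (bb j), hBP _ _ (bb i).2 (bb j).2⟩).rank = k} := by
  intro n aa haa m bb hbb
  have hP : IsSkewBiderivation ℂ P := ⟨hadd, hsmul, hanti, hleib⟩
  let cc : Fin m → A := fun i => bb i
  have hcc : Algebra.adjoin ℂ (Set.range cc) = B := by
    rw [show Set.range cc = B.val '' Set.range bb from Set.range_comp _ _, ← AlgHom.map_adjoin,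
      hbb, Algebra.map_top, Subalgebra.range_val]
  let MB : Matrix (Fin m) (Fin m) B :=
    Matrix.of fun i j => ⟨P (bb i) (bb j), hBP _ _ (bb i).2 (bb j).2⟩
  show ⨆ x : A →ₐ[ℂ] ℂ, ((poissonMatrix P aa aa).map x).rank =
    ⨆ y : B →ₐ[ℂ] ℂ, (MB.map y).rank
  refine le_antisymm (ciSup_mono_of_forall_exists' ⟨m, ?_⟩ fun x => ?_)
    (ciSup_mono_of_forall_exists' ⟨n, ?_⟩ fun y => ?_)
  · rintro _ ⟨y, rfl⟩; exact Matrix.rank_le_width _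
  · exact hP.exists_rank_le_of_isIntegral MB rfl hcc aa x
  · rintro _ ⟨x, rfl⟩; exact Matrix.rank_le_width _
  · exact hP.exists_rank_ge_of_adjoin_eq_top MB rfl haa y

/-- For a Poisson subalgebra `B ⊆ A` of affine complex Poisson algebras with `A` a
finite `B`-module, `rank A = rank B`: the maximum over points of the rank of the
Poisson structure matrix is the same for `A` and for `B` (for any generating families). -/
theorem poisson_rank_eq_of_finite
    {A : Type*} [CommRing A] [Algebra ℂ A] [Algebra.FiniteType ℂ A]
    (P : A → A → A)
    (hadd : ∀ x y z : A, P (x + y) z = P x z + P y z)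
    (hsmul : ∀ (c : ℂ) (x y : A), P (c • x) y = c • P x y)
    (hanti : ∀ x y : A, P x y = - P y x)
    (hjac : ∀ x y z : A, P x (P y z) + P y (P z x) + P z (P x y) = 0)
    (hleib : ∀ x y z : A, P x (y * z) = P x y * z + y * P x z)
    (B : Subalgebra ℂ A)
    (hBP : ∀ x y : A, x ∈ B → y ∈ B → P x y ∈ B)
    [Module.Finite B A] :
    ∀ (n : ℕ) (aa : Fin n → A), Algebra.adjoin ℂ (Set.range aa) = ⊤ →
    ∀ (m : ℕ) (bb : Fin m → B), Algebra.adjoin ℂ (Set.range bb) = ⊤ →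
      sSup {k : ℕ | ∃ x : A →ₐ[ℂ] ℂ,
          (Matrix.of fun i j : Fin n => x (P (aa i) (aa j))).rank = k}
        = sSup {k : ℕ | ∃ y : B →ₐ[ℂ] ℂ,
            (Matrix.of fun i j : Fin m =>
              y ⟨P (bb i) (bb j), hBP _ _ (bb i).2 (bb j).2⟩).rank = k} :=
  poisson_rank_eq_of_finite_general P hadd hsmul hanti hleib B hBP
end

section
/- Commutation of quantum adjoint action with diagonal automorphisms: let τ be an automorphism of R with τ|_C = id, u ∈ R with τ(u) = q^m u and u_ε central in R_ε, θ = (τ^l - id)/(q-ε), m̄ = ml ε^{-1}, and D_u the quantum adjoint derivation of u. Then (a) θ(u_ε) = m̄ u_ε, (b) τ ∘ D_u = ε^m · D_u ∘ τ on R_ε, and (c) θ ∘ D_u = D_u ∘ (θ + m̄) on R_ε. -/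
/-!
Write `d = q - ε`. Because `τ` fixes `C` and `τ u = q^m u`, applying `τ` to `u a - a u = d w`
gives `u (τ a) - (τ a) u = d q^{-m} τ w`, which computes `D_u` at `τ a`; modulo `d` the scalar
`q^{-m}` is `ε^{-m}`, whence (b). For (a) and (c) expand to first order in `d`: the Taylor
expansion of `v ↦ v^n` at `v = 1` together with `ε^{ml} = 1` gives `q^{ml} = 1 + d s` with
`s ≡ m l ε^{-1} = m̄ (mod d)`. Then (a) is `d Θ u = (q^{ml} - 1) u` divided by the regular
element `d`, and (c) comes from applying `τ^l = 1 + d Θ` to `u a - a u = d w` and dividing by `d`.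
-/

theorem Units.sub_one_sq_dvd_zpow_sub_one_sub_mul {C : Type*} [CommRing C] (v : Cˣ) (n : ℤ) :
    ((v : C) - 1) ^ 2 ∣ ((v ^ n : Cˣ) : C) - 1 - n * ((v : C) - 1) := by
  induction n using Int.induction_on with
  | zero => simp
  | succ k ih =>
    obtain ⟨t, ht⟩ := ih
    refine ⟨k + t * v, ?_⟩
    rw [zpow_add_one, Units.val_mul]
    push_cast at ht ⊢
    linear_combination (v : C) * ht
  | pred k ih =>
    obtain ⟨t, ht⟩ := ih
    have hv : ((v⁻¹ : Cˣ) : C) * v = 1 := by simp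
    -- `v⁻¹ = 1 - (v - 1) + (v - 1) ^ 2 * v⁻¹`
    refine ⟨(t + k + 1) * (v⁻¹ : Cˣ), ?_⟩
    rw [zpow_sub_one, Units.val_mul]
    push_cast at ht ⊢
    linear_combination ((v⁻¹ : Cˣ) : C) * ht + (1 - (k + 1) * ((v : C) - 1)) * hv

theorem Units.exists_zpow_eq_add_sub_mul {C : Type*} [CommRing C] (q ε : Cˣ) (n : ℤ) :
    ∃ s : C, ((q ^ n : Cˣ) : C) = ((ε ^ n : Cˣ) : C) + (q - ε) * s ∧
      ((q : C) - ε) ∣ s - n * ((ε ^ (n - 1) : Cˣ) : C) := by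
  set v := q * ε⁻¹
  obtain ⟨t, ht⟩ := v.sub_one_sq_dvd_zpow_sub_one_sub_mul n
  have hq : q ^ n = ε ^ n * v ^ n := by simp [v, mul_zpow]
  have hε : ε ^ (n - 1) = ε ^ n * ε⁻¹ := zpow_sub_one ε n
  have hv : (v : C) - 1 = (q - ε) * (ε⁻¹ : Cˣ) := by rw [Units.val_mul, sub_mul, Units.mul_inv]
  refine ⟨((ε ^ (n - 1) : Cˣ) : C) * (n + (v - 1) * t), ?_,
    ⟨(ε ^ (n - 1) : Cˣ) * (ε⁻¹ : Cˣ) * t, ?_⟩⟩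
  · rw [hq, Units.val_mul, hε, Units.val_mul]
    linear_combination (ε ^ n : Cˣ) * ht + ((ε ^ n : Cˣ) * (n + (v - 1) * t) : C) * hv
  · rw [hv]; ring

theorem Units.dvd_mul_inv_sub_one {C : Type*} [CommRing C] {d e : C} {c : Cˣ} (h : d ∣ c - e) :
    d ∣ e * ((c⁻¹ : Cˣ) : C) - 1 := by
  have key : e * ((c⁻¹ : Cˣ) : C) - 1 = -((c : C) - e) * ((c⁻¹ : Cˣ) : C) := by
    linear_combination c.mul_inv
  exact key ▸ (dvd_neg.2 h).mul_right _

theorem smul_eq_smul_of_dvd_sub {C M : Type*} [CommRing C] [AddCommGroup M] [Module C M] {d s t : C}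
    (hd : ∀ x : M, d • x = 0) (h : d ∣ s - t) (x : M) : s • x = t • x := by
  obtain ⟨k, hk⟩ := h
  rw [← sub_eq_zero, ← sub_smul, hk, mul_smul, hd]

section
variable {C R : Type*} [CommRing C] [Ring R] [Algebra C R]

theorem AlgHom.pow_apply_of_apply_eq_smul (σ : R →ₐ[C] R) {u : R} {c : C} (h : σ u = c • u)
    (k : ℕ) : (σ ^ k) u = c ^ k • u := by
  induction k with
  | zero => simp
  | succ k ih => rw [pow_succ', AlgHom.mul_apply, ih, map_smul, h, smul_smul, pow_succ]

theorem AlgHom.commutator_apply_of_apply_eq_smul (σ : R →ₐ[C] R) {u a w : R} {c : Cˣ} {d : C}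
    (hu : σ u = (c : C) • u) (h : u * a - a * u = d • w) :
    u * σ a - σ a * u = d • ((c⁻¹ : Cˣ) : C) • σ w := by
  have h' := congrArg σ h
  rw [map_sub, map_mul, map_mul, hu, map_smul, smul_mul_assoc, mul_smul_comm, ← smul_sub] at h'
  rw [smul_comm, ← h', smul_smul, ← Units.val_mul, inv_mul_cancel, Units.val_one, one_smul]

theorem commutator_divDiff_eq_smul {T : R →ₐ[C] R} {Θ : R → R} {u a w : R} {c : Cˣ} {d s : C}
    (hreg : IsSMulRegular R d) (hT : ∀ x, T x = x + d • Θ x) (hu : T u = (c : C) • u)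
    (hc : (c : C) = 1 + d * s) (h : u * a - a * u = d • w) :
    u * Θ a - Θ a * u = d • ((c⁻¹ : Cˣ) : C) • (Θ w - s • w) := by
  have hTa := T.commutator_apply_of_apply_eq_smul hu h
  have hc' : ((c⁻¹ : Cˣ) : C) = 1 - d * s * ((c⁻¹ : Cˣ) : C) := by
    linear_combination (hc ▸ c.inv_mul : ((c⁻¹ : Cˣ) : C) * (1 + d * s) = 1)
  have expand : u * T a - T a * u = d • (w + (u * Θ a - Θ a * u)) := by
    rw [hT, mul_add, add_mul, mul_smul_comm, smul_mul_assoc, smul_add, smul_sub, ← h]; abel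
  rw [expand, hT] at hTa
  have hΘa : w + (u * Θ a - Θ a * u) = ((c⁻¹ : Cˣ) : C) • (w + d • Θ w) := hreg hTa
  linear_combination (norm := module) hΘa + hc' • w
end

section
variable {C R Rε : Type*} [CommRing C] [Ring R] [Ring Rε] [Algebra C R] [Algebra C Rε]

theorem smul_eq_zero_of_ker_eq (π : R →ₐ[C] Rε) {d : C} (hπ : ∀ r, π r = 0 ↔ ∃ w, r = d • w)
    (x : Rε) : d • x = 0 := by
  have h1 : π (d • 1) = 0 := (hπ _).2 ⟨1, rfl⟩
  rw [map_smul, map_one] at h1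
  rw [← one_mul x, ← smul_mul_assoc, h1, zero_mul]

theorem exists_commutator_eq_smul (π : R →ₐ[C] Rε) {d : C}
    (hπ : ∀ r, π r = 0 ↔ ∃ w, r = d • w) {u : R} (hu : ∀ x, Commute (π u) x) (a : R) :
    ∃ w, u * a - a * u = d • w :=
  (hπ _).1 (by rw [map_sub, map_mul, map_mul, (hu _).eq, sub_self])

theorem divDiff_apply_eq_smul_of_apply_eq_smul (π : R →ₐ[C] Rε) {d : C}
    (hd : ∀ x : Rε, d • x = 0) (hreg : IsSMulRegular R d) {T Θ : R → R} {θ : Rε → Rε}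
    (hθ : ∀ a, θ (π a) = π (Θ a)) {u : R} (hT : T u = u + d • Θ u) {c s μ : C}
    (hu : T u = c • u) (hc : c = 1 + d * s) (hs : d ∣ s - μ) :
    θ (π u) = μ • π u := by
  have hΘu : Θ u = s • u := hreg <| by
    rw [← add_right_inj u, ← hT, hu, hc, add_smul, one_smul, mul_smul]
  rw [hθ, hΘu, map_smul, smul_eq_smul_of_dvd_sub hd hs]

theorem apply_quantumAdjoint_eq_smul_quantumAdjoint_apply (π : R →ₐ[C] Rε)
    (hπ : Function.Surjective π) {d : C} (hd : ∀ x : Rε, d • x = 0) {u : R}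
    (hcomm : ∀ a, ∃ w, u * a - a * u = d • w) {D : Rε → Rε}
    (hD : ∀ a w, u * a - a * u = d • w → D (π a) = π w) (τ : R →ₐ[C] R) (τε : Rε →+* Rε)
    (hτε : ∀ a, τε (π a) = π (τ a)) {c : Cˣ} (hu : τ u = (c : C) • u) {e : C} (hce : d ∣ c - e)
    (x : Rε) : τε (D x) = e • D (τε x) := by
  obtain ⟨a, rfl⟩ := hπ x
  obtain ⟨w, hw⟩ := hcomm a
  rw [hD a w hw, hτε, hτε, hD _ _ (τ.commutator_apply_of_apply_eq_smul hu hw), map_smul,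
    smul_smul, smul_eq_smul_of_dvd_sub hd (Units.dvd_mul_inv_sub_one hce), one_smul]

theorem divDiff_quantumAdjoint_eq_quantumAdjoint_add_smul (π : R →ₐ[C] Rε)
    (hπ : Function.Surjective π) {d : C} (hd : ∀ x : Rε, d • x = 0) (hreg : IsSMulRegular R d)
    {u : R} (hcomm : ∀ a, ∃ w, u * a - a * u = d • w) {D : Rε → Rε}
    (hD : ∀ a w, u * a - a * u = d • w → D (π a) = π w) {T : R →ₐ[C] R} {Θ : R → R}
    {θ : Rε → Rε} (hT : ∀ x, T x = x + d • Θ x) (hθ : ∀ a, θ (π a) = π (Θ a)) {c : Cˣ}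
    (hu : T u = (c : C) • u) {s μ : C} (hc : (c : C) = 1 + d * s) (hs : d ∣ s - μ) (x : Rε) :
    θ (D x) = D (θ x + μ • x) := by
  obtain ⟨a, rfl⟩ := hπ x
  obtain ⟨w, hw⟩ := hcomm a
  have hΘa := commutator_divDiff_eq_smul hreg hT hu hc hw
  have hΘa' : u * (Θ a + μ • a) - (Θ a + μ • a) * u
      = d • (((c⁻¹ : Cˣ) : C) • (Θ w - s • w) + μ • w) := by
    rw [mul_add, add_mul, mul_smul_comm, smul_mul_assoc]
    linear_combination (norm := module) hΘa + μ • hw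
  have hc' : d ∣ ((c⁻¹ : Cˣ) : C) - 1 := by
    simpa only [one_mul] using Units.dvd_mul_inv_sub_one (e := 1) ⟨s, by rw [hc]; ring⟩
  rw [hD a w hw, hθ, hθ, ← map_smul, ← map_add, hD _ _ hΘa', map_add, map_smul, map_smul,
    map_sub, map_smul, smul_eq_smul_of_dvd_sub hd hc', one_smul,
    smul_eq_smul_of_dvd_sub hd hs]
  abel
end

theorem quantum_adjoint_commutation_with_diagonal_general
    {C R Rε : Type*} [CommRing C] [Ring R] [Ring Rε]
    [Algebra C R] [Algebra C Rε]
    (q eps : Cˣ) (l : ℕ) (hprim : IsPrimitiveRoot (eps : C) l)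
    (m : ℤ)
    (τ : R →+* R)
    (hτC : ∀ c : C, τ (algebraMap C R c) = algebraMap C R c)
    (π : R →+* Rε) (hπsurj : Function.Surjective π)
    (hπC : ∀ c : C, π (algebraMap C R c) = algebraMap C Rε c)
    (hπker : ∀ r : R, π r = 0 ↔ ∃ w : R, r = algebraMap C R ((q : C) - (eps : C)) * w)
    (hreg : ∀ r : R, algebraMap C R ((q : C) - (eps : C)) * r = 0 → r = 0)
    (u : R) (hu : τ u = algebraMap C R ((q ^ m : Cˣ) : C) * u)
    (hucentral : ∀ x : Rε, Commute (π u) x)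
    -- τ^l ≡ id mod (q-ε) and the divided-difference derivation θ:
    (Θ : R → R)
    (hΘ : ∀ a : R, (⇑τ)^[l] a - a = algebraMap C R ((q : C) - (eps : C)) * Θ a)
    (θ : Rε → Rε) (hθ : ∀ a : R, θ (π a) = π (Θ a))
    -- the induced automorphism of R_ε:
    (τε : Rε →+* Rε) (hτε : ∀ a : R, τε (π a) = π (τ a))
    -- the quantum adjoint derivation of u:
    (D : Rε → Rε)
    (hD : ∀ a w : R, u * a - a * u = algebraMap C R ((q : C) - (eps : C)) * w →
      D (π a) = π w)
    -- m̄ = m l ε^{-1}: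
    (mbar : C) (hmbar : mbar = (((m * (l : ℤ) : ℤ) : C)) * ((eps⁻¹ : Cˣ) : C)) :
    -- (a)
    θ (π u) = algebraMap C Rε mbar * π u ∧
    -- (b)
    (∀ x : Rε, τε (D x) = algebraMap C Rε ((eps ^ m : Cˣ) : C) * D (τε x)) ∧
    -- (c)
    (∀ x : Rε, θ (D x) = D (θ x + algebraMap C Rε mbar * x)) := by
  set d : C := (q : C) - eps
  let τA : R →ₐ[C] R := { τ with commutes' := hτC }
  let πA : R →ₐ[C] Rε := { π with commutes' := hπC }
  have hker : ∀ r, πA r = 0 ↔ ∃ w, r = d • w := by simp_rw [Algebra.smul_def]; exact hπker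
  have hd := smul_eq_zero_of_ker_eq πA hker
  have hreg' : IsSMulRegular R d := (isSMulRegular_algebraMap_iff R).1
    (isLeftRegular_iff_right_eq_zero_of_mul.2 hreg).isSMulRegular
  have hcomm := exists_commutator_eq_smul πA hker hucentral
  have hD' : ∀ a w, u * a - a * u = d • w → D (πA a) = πA w := by
    simp_rw [Algebra.smul_def]; exact hD
  have hτu : τA u = ((q ^ m : Cˣ) : C) • u := by rw [Algebra.smul_def]; exact hu
  have hT : ∀ a, (τA ^ l) a = a + d • Θ a := fun a => by
    rw [AlgHom.coe_pow, Algebra.smul_def, ← hΘ, add_sub_cancel]; rfl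
  have hTu : (τA ^ l) u = ((q ^ (m * l) : Cˣ) : C) • u := by
    rw [τA.pow_apply_of_apply_eq_smul hτu, ← Units.val_pow_eq_pow_val, zpow_mul, zpow_natCast]
  have hεml : eps ^ (m * l) = 1 := by
    rw [mul_comm, zpow_mul, zpow_natCast, (IsPrimitiveRoot.coe_units_iff.1 hprim).pow_eq_one,
      one_zpow]
  obtain ⟨s, hs, hsμ⟩ := q.exists_zpow_eq_add_sub_mul eps (m * l)
  rw [hεml, Units.val_one] at hs
  rw [zpow_sub_one, hεml, one_mul, ← hmbar] at hsμ
  obtain ⟨s', hs', -⟩ := q.exists_zpow_eq_add_sub_mul eps m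
  simp only [← Algebra.smul_def]
  exact ⟨divDiff_apply_eq_smul_of_apply_eq_smul πA hd hreg' hθ (hT u) hTu hs hsμ,
    apply_quantumAdjoint_eq_smul_quantumAdjoint_apply πA hπsurj hd hcomm hD' τA τε hτε hτu
      ⟨s', sub_eq_iff_eq_add'.2 hs'⟩,
    divDiff_quantumAdjoint_eq_quantumAdjoint_add_smul πA hπsurj hd hreg' hcomm hD' hT hθ hTu hs
      hsμ⟩

/-- Commutation of the quantum adjoint action with diagonal automorphisms:
if `τ(u) = q^m u`, `u_ε` is central, `θ = (τ^l - id)/(q-ε)` and `m̄ = m l ε^{-1}`, then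
(a) `θ(u_ε) = m̄ u_ε`, (b) `τ ∘ D_u = ε^m · D_u ∘ τ`, (c) `θ ∘ D_u = D_u ∘ (θ + m̄)`. -/
theorem quantum_adjoint_commutation_with_diagonal
    {C R Rε : Type*} [CommRing C] [IsDomain C] [Ring R] [Ring Rε]
    [Algebra C R] [Algebra C Rε] [Module.Free C R]
    (q eps : Cˣ) (l : ℕ) (hl : 0 < l) (hprim : IsPrimitiveRoot (eps : C) l)
    (m : ℤ)
    (τ : R →+* R)
    (hτC : ∀ c : C, τ (algebraMap C R c) = algebraMap C R c)
    (π : R →+* Rε) (hπsurj : Function.Surjective π)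
    (hπC : ∀ c : C, π (algebraMap C R c) = algebraMap C Rε c)
    (hπker : ∀ r : R, π r = 0 ↔ ∃ w : R, r = algebraMap C R ((q : C) - (eps : C)) * w)
    (hreg : ∀ r : R, algebraMap C R ((q : C) - (eps : C)) * r = 0 → r = 0)
    (u : R) (hu : τ u = algebraMap C R ((q ^ m : Cˣ) : C) * u)
    (hucentral : ∀ x : Rε, Commute (π u) x)
    -- τ^l ≡ id mod (q-ε) and the divided-difference derivation θ:
    (Θ : R → R)
    (hΘ : ∀ a : R, (⇑τ)^[l] a - a = algebraMap C R ((q : C) - (eps : C)) * Θ a)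
    (θ : Rε → Rε) (hθ : ∀ a : R, θ (π a) = π (Θ a))
    -- the induced automorphism of R_ε:
    (τε : Rε →+* Rε) (hτε : ∀ a : R, τε (π a) = π (τ a))
    -- the quantum adjoint derivation of u:
    (D : Rε → Rε)
    (hD : ∀ a w : R, u * a - a * u = algebraMap C R ((q : C) - (eps : C)) * w →
      D (π a) = π w)
    -- m̄ = m l ε^{-1}:
    (mbar : C) (hmbar : mbar = (((m * (l : ℤ) : ℤ) : C)) * ((eps⁻¹ : Cˣ) : C)) :
    -- (a)
    θ (π u) = algebraMap C Rε mbar * π u ∧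
    -- (b)
    (∀ x : Rε, τε (D x) = algebraMap C Rε ((eps ^ m : Cˣ) : C) * D (τε x)) ∧
    -- (c)
    (∀ x : Rε, θ (D x) = D (θ x + algebraMap C Rε mbar * x)) :=
  quantum_adjoint_commutation_with_diagonal_general q eps l hprim m τ hτC π hπsurj hπC hπker hreg u
    hu hucentral Θ hΘ θ hθ τε hτε D hD mbar hmbar
end

section
/- Let R be a C-algebra free as a C-module, P a semiprime ideal of R with P ∩ C = 0, and ε a root of unity; set P_ε = (P + (q-ε)R) mod (q-ε) inside R_ε. Then P_ε is stable under every quantum adjoint derivation D_u (u ∈ R with u_ε central in R_ε); moreover, for B = R/P, the derivation D_u descends on B_ε = B mod (q-ε) to the quantum adjoint derivation of the image of u, and the image of the center Z_ε of R_ε in B_ε is a Poisson subalgebra of the center of B_ε. -/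
/-- Let `P` be a semiprime (two-sided) ideal of `R` with `P ∩ C = 0`, and let
`P_ε` be its image in `R_ε`. Then (1) `P_ε` is stable under every quantum adjoint
derivation `D_u`; (2) for `B = R/P`, `D_u` descends to `B_ε` and coincides with the
quantum adjoint derivation of the image of `u`; (3) the image of the center `Z_ε` of
`R_ε` in `B_ε` is a Poisson subalgebra of the center of `B_ε` (the Poisson brackets
agree). -/
theorem stability_and_descent_of_quantum_adjoint
    {C R Rε B Bε : Type*} [CommRing C] [IsDomain C]
    [Ring R] [Ring Rε] [Ring B] [Ring Bε]
    [Algebra C R] [Algebra C B] [Module.Free C R]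
    (q eps : C)
    (P : TwoSidedIdeal R)
    (hsemiprime : ∀ a : R, (∀ w : R, a * w * a ∈ P) → a ∈ P)
    (hPC : ∀ c : C, algebraMap C R c ∈ P → c = 0)
    (π : R →+* Rε) (hπsurj : Function.Surjective π)
    (hπker : ∀ r : R, π r = 0 ↔ ∃ w : R, r = algebraMap C R (q - eps) * w)
    (hreg : ∀ r : R, algebraMap C R (q - eps) * r = 0 → r = 0)
    -- the quotient B = R/P:
    (ψ : R →+* B) (hψsurj : Function.Surjective ψ)
    (hψC : ∀ c : C, ψ (algebraMap C R c) = algebraMap C B c)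
    (hψker : ∀ r : R, ψ r = 0 ↔ r ∈ P)
    -- the reduction B_ε = B mod (q-ε):
    (πB : B →+* Bε) (hπBsurj : Function.Surjective πB)
    (hπBker : ∀ b : B, πB b = 0 ↔ ∃ w : B, b = algebraMap C B (q - eps) * w)
    (hregB : ∀ b : B, algebraMap C B (q - eps) * b = 0 → b = 0) :
    -- (1) `P_ε = π(P)` is stable under every quantum adjoint derivation `D_u`:
    (∀ u : R, (∀ x : Rε, Commute (π u) x) →
      ∀ a w : R, u * a - a * u = algebraMap C R (q - eps) * w →
        π a ∈ Set.image π P → π w ∈ Set.image π P) ∧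
    -- (2) `D_u` descends to `B_ε` and coincides with the quantum adjoint
    -- derivation of `ψ u`:
    (∀ u : R, (∀ x : Rε, Commute (π u) x) →
      ∀ (a w : R) (w' : B),
        u * a - a * u = algebraMap C R (q - eps) * w →
        ψ u * ψ a - ψ a * ψ u = algebraMap C B (q - eps) * w' →
        πB w' = πB (ψ w)) ∧
    -- (3) the Poisson bracket on the image of `Z_ε` in the center of `B_ε` is
    -- inherited from the Poisson bracket on `Z_ε`:
    (∀ u v : R, (∀ x : Rε, Commute (π u) x) → (∀ x : Rε, Commute (π v) x) →
      (∀ y : Bε, Commute (πB (ψ u)) y) ∧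
      ∀ (w : R) (w' : B),
        u * v - v * u = algebraMap C R (q - eps) * w →
        ψ u * ψ v - ψ v * ψ u = algebraMap C B (q - eps) * w' →
        πB w' = πB (ψ w)) := by

  have sat : ∀ m : R, algebraMap C R (q - eps) * m ∈ P → m ∈ P := by
    intro m hm
    have h1 : ψ (algebraMap C R (q - eps) * m) = 0 := (hψker _).mpr hm
    rw [map_mul, hψC] at h1
    exact (hψker m).mp (hregB _ h1)
  -- descent lemma (parts 2 and 3, second half)
  have desc : ∀ (u a w : R) (w' : B),
      u * a - a * u = algebraMap C R (q - eps) * w →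
      ψ u * ψ a - ψ a * ψ u = algebraMap C B (q - eps) * w' →
      πB w' = πB (ψ w) := by
    intro u a w w' h1 h2
    have h3 : ψ u * ψ a - ψ a * ψ u = algebraMap C B (q - eps) * ψ w := by
      rw [← map_mul, ← map_mul, ← map_sub, h1, map_mul, hψC]
    have h4 : algebraMap C B (q - eps) * (w' - ψ w) = 0 := by
      rw [mul_sub, ← h2, ← h3, sub_self]
    have h5 : w' = ψ w := sub_eq_zero.mp (hregB _ h4)
    rw [h5]
  refine ⟨?_, ?_, ?_⟩
  · -- (1)
    intro u hu a w hw ha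
    obtain ⟨p, hpP, hpa⟩ := ha
    have hap : π (a - p) = 0 := by rw [map_sub, hpa, sub_self]
    obtain ⟨t, ht⟩ := (hπker _).mp hap
    have hupP : u * p - p * u ∈ P :=
      P.sub_mem (P.mul_mem_left _ _ hpP) (P.mul_mem_right _ _ hpP)
    have hupc : π (u * p - p * u) = 0 := by
      rw [map_sub, map_mul, map_mul, (hu (π p)).eq, sub_self]
    obtain ⟨m, hm⟩ := (hπker _).mp hupc
    have hmP : m ∈ P := sat m (hm ▸ hupP)
    have hcomm : ∀ x : R, algebraMap C R (q - eps) * x = x * algebraMap C R (q - eps) :=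
      fun x => Algebra.commutes (q - eps) x
    have ha' : a = p + algebraMap C R (q - eps) * t := by
      rw [← ht]; abel
    have key : algebraMap C R (q - eps) * w
        = algebraMap C R (q - eps) * (m + (u * t - t * u)) := by
      rw [← hw, ha']
      have e1 : u * (algebraMap C R (q - eps) * t)
          = algebraMap C R (q - eps) * (u * t) := by
        rw [← mul_assoc, ← hcomm u, mul_assoc]
      have e2 : (algebraMap C R (q - eps) * t) * u
          = algebraMap C R (q - eps) * (t * u) := by
        rw [mul_assoc]
      rw [mul_add, add_mul, e1, e2, mul_add, mul_sub, ← hm]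
      abel
    have hw' : w = m + (u * t - t * u) := by
      have : algebraMap C R (q - eps) * (w - (m + (u * t - t * u))) = 0 := by
        rw [mul_sub, key, sub_self]
      exact sub_eq_zero.mp (hreg _ this)
    refine ⟨m, hmP, ?_⟩
    rw [hw', map_add, map_sub, map_mul, map_mul, (hu (π t)).eq, sub_self, add_zero]
  · -- (2)
    intro u _ a w w' h1 h2
    exact desc u a w w' h1 h2
  · -- (3)
    intro u v hu _
    constructor
    · intro y
      obtain ⟨b, rfl⟩ := hπBsurj y
      obtain ⟨r, rfl⟩ := hψsurj b
      have hur : π (u * r - r * u) = 0 := by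
        rw [map_sub, map_mul, map_mul, (hu (π r)).eq, sub_self]
      obtain ⟨t, ht⟩ := (hπker _).mp hur
      have hB : ψ u * ψ r - ψ r * ψ u = algebraMap C B (q - eps) * ψ t := by
        rw [← map_mul, ← map_mul, ← map_sub, ht, map_mul, hψC]
      have hπBc : πB (algebraMap C B (q - eps)) = 0 :=
        (hπBker _).mpr ⟨1, (mul_one _).symm⟩
      have : πB (ψ u * ψ r) - πB (ψ r * ψ u) = 0 := by
        rw [← map_sub, hB, map_mul, hπBc, zero_mul]
      have h6 : πB (ψ u * ψ r) = πB (ψ r * ψ u) := sub_eq_zero.mp this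
      simp only [map_mul] at h6
      exact h6
    · intro w w' h1 h2
      exact desc u v w w' h1 h2
end
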